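/- arXiv:1409.3564 — 7 statements merged into one kernel-verified Lean document; each statement's English description precedes it below -/
import Mathlib

section
/- Let H be a group acting by measure-preserving measurable bijections on a probability space (X,ν) (i.e. ν(X) = 1), and let μ be a finitely supported probability measure on H. Then for every f ∈ L⁴(ν) with ‖f‖_{L⁴} = 1, one has ‖π(μ)f‖_{L⁴} ≤ 1 − 2^{−5} · inf over f₀ ∈ L⁴(ν) with ‖f₀‖_{L⁴} = 1 of Σ_g μ(g)·‖π(g)f − f₀‖_{L⁴}^4. -/
/-!
Clarkson's inequality for the exponent 4, `‖u - v‖⁴ + ‖u + v‖⁴ ≤ 8‖u‖⁴ + 8‖v‖⁴`, holds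
pointwise by the parallelogram law and hence in `L⁴`. Put `S = π(μ)f` and pick a unit vector
`f₀` with `‖S + f₀‖ = ‖S‖ + 1` (`f₀ = S / ‖S‖`, or any unit vector if `S = 0`). Since every
`π(g)f` is a unit vector, Clarkson gives `‖π(g)f - f₀‖⁴ ≤ 16 - ‖π(g)f + f₀‖⁴`; averaging, with
the power mean and triangle inequalities, `∑ μ(g) ‖π(g)f - f₀‖⁴ ≤ 16 - (‖S‖ + 1)⁴`. Finally
`a ≤ 1 - (16 - (a + 1)⁴) / 32` for every real `a`.
-/

open MeasureTheory
open scoped ENNReal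

theorem norm_sub_pow_four_add_norm_add_pow_four_le {E : Type*} [NormedAddCommGroup E]
    [InnerProductSpace ℝ E] (a b : E) :
    ‖a - b‖ ^ 4 + ‖a + b‖ ^ 4 ≤ 8 * ‖a‖ ^ 4 + 8 * ‖b‖ ^ 4 := by
  have parallelogram := parallelogram_law_with_norm ℝ a b
  nlinarith [sq_nonneg (‖a‖ ^ 2 - ‖b‖ ^ 2), mul_nonneg (sq_nonneg ‖a + b‖) (sq_nonneg ‖a - b‖)]

namespace MeasureTheory.Lp

variable {X E : Type*} [MeasurableSpace X] {ν : Measure X} [NormedAddCommGroup E]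

theorem norm_pow_four_eq_integral (u : Lp E 4 ν) : ‖u‖ ^ 4 = ∫ x, ‖u x‖ ^ 4 ∂ν := by
  rw [norm_def, (Lp.memLp u).eLpNorm_eq_integral_rpow_norm (by norm_num) (by norm_num),
    ENNReal.toReal_ofReal (by positivity), ← Real.rpow_natCast, ← Real.rpow_mul (by positivity)]
  norm_num

theorem norm_sub_pow_four_add_norm_add_pow_four_le [InnerProductSpace ℝ E] (u v : Lp E 4 ν) :
    ‖u - v‖ ^ 4 + ‖u + v‖ ^ 4 ≤ 8 * ‖u‖ ^ 4 + 8 * ‖v‖ ^ 4 := by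
  have integrable (w : Lp E 4 ν) : Integrable (fun x => ‖w x‖ ^ 4) ν :=
    (Lp.memLp w).integrable_norm_pow (p := 4) (by norm_num)
  simp only [norm_pow_four_eq_integral]
  rw [← integral_add (integrable _) (integrable _), ← integral_const_mul, ← integral_const_mul,
    ← integral_add ((integrable u).const_mul 8) ((integrable v).const_mul 8)]
  refine integral_mono_ae ((integrable _).add (integrable _))
    (((integrable u).const_mul 8).add ((integrable v).const_mul 8)) ?_
  filter_upwards [coeFn_sub u v, coeFn_add u v] with x hsub hadd
  simpa only [hsub, hadd, Pi.sub_apply, Pi.add_apply] using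
    _root_.norm_sub_pow_four_add_norm_add_pow_four_le (u x) (v x)

variable {p : ℝ≥0∞}

theorem norm_toLp_sub {u : X → E} (hu : MemLp u p ν) (v : Lp E p ν) :
    ‖hu.toLp u - v‖ = (eLpNorm (fun x => u x - v x) p ν).toReal := by
  rw [norm_def, eLpNorm_congr_ae ((coeFn_sub _ _).trans (hu.coeFn_toLp.sub (ae_eq_refl _)))]
  rfl

theorem norm_sum_smul_toLp [NormedSpace ℝ E] {ι : Type*} (s : Finset ι) (w : ι → ℝ)
    {u : ι → X → E} (hu : ∀ i, MemLp (u i) p ν) :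
    ‖∑ i ∈ s, w i • (hu i).toLp (u i)‖ = (eLpNorm (fun x => ∑ i ∈ s, w i • u i x) p ν).toReal := by
  rw [norm_def]
  congr 1
  refine eLpNorm_congr_ae ?_
  have hcoe : ∀ᵐ x ∂ν, ∀ i ∈ s, (w i • (hu i).toLp (u i) : Lp E p ν) x = w i • u i x :=
    (Filter.eventually_all_finset s).2 fun i _ => by
      filter_upwards [coeFn_smul (w i) ((hu i).toLp (u i)), (hu i).coeFn_toLp] with x hsmul hx
      rw [hsmul, Pi.smul_apply, hx]
  filter_upwards [coeFn_fun_finsetSum s fun i => w i • (hu i).toLp (u i), hcoe] with x hsum hx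
  rw [hsum]
  exact Finset.sum_congr rfl hx

end MeasureTheory.Lp

section UniformConvexity

variable {E ι : Type*} [NormedAddCommGroup E] [NormedSpace ℝ E]

theorem exists_norm_eq_one_and_norm_add_eq (x e : E) (he : ‖e‖ = 1) :
    ∃ y : E, ‖y‖ = 1 ∧ ‖x + y‖ = ‖x‖ + 1 := by
  rcases eq_or_ne x 0 with rfl | hx
  · exact ⟨e, he, by simp [he]⟩
  · have hunit : ‖‖x‖⁻¹ • x‖ = 1 := by
      rw [norm_smul, norm_inv, norm_norm, inv_mul_cancel₀ (norm_ne_zero_iff.2 hx)]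
    refine ⟨‖x‖⁻¹ • x, hunit, ?_⟩
    rw [(SameRay.sameRay_nonneg_smul_right x (inv_nonneg.2 (norm_nonneg x))).norm_add, hunit]

theorem sum_mul_norm_sub_pow_four_le
    (hC : ∀ u v : E, ‖u - v‖ ^ 4 + ‖u + v‖ ^ 4 ≤ 8 * ‖u‖ ^ 4 + 8 * ‖v‖ ^ 4)
    {s : Finset ι} {w : ι → ℝ} (hw0 : ∀ i ∈ s, 0 ≤ w i) (hw1 : ∑ i ∈ s, w i = 1)
    {F : ι → E} (hF : ∀ i ∈ s, ‖F i‖ = 1) {y : E} (hy : ‖y‖ = 1) :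
    ∑ i ∈ s, w i * ‖F i - y‖ ^ 4 ≤ 16 - ‖∑ i ∈ s, w i • F i + y‖ ^ 4 := by
  have hsum : ∑ i ∈ s, w i • F i + y = ∑ i ∈ s, w i • (F i + y) := by
    rw [Finset.sum_congr rfl fun i _ => smul_add (w i) (F i) y, Finset.sum_add_distrib,
      ← Finset.sum_smul, hw1, one_smul]
  have htri : ‖∑ i ∈ s, w i • F i + y‖ ≤ ∑ i ∈ s, w i * ‖F i + y‖ := by
    rw [hsum]
    refine (norm_sum_le _ _).trans_eq (Finset.sum_congr rfl fun i hi => ?_)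
    rw [norm_smul, Real.norm_of_nonneg (hw0 i hi)]
  have hterm : ∀ i ∈ s, ‖F i - y‖ ^ 4 ≤ 16 - ‖F i + y‖ ^ 4 := fun i hi => by
    have := hC (F i) y
    rw [hF i hi, hy] at this
    linarith
  calc ∑ i ∈ s, w i * ‖F i - y‖ ^ 4
      ≤ ∑ i ∈ s, w i * (16 - ‖F i + y‖ ^ 4) :=
        Finset.sum_le_sum fun i hi => mul_le_mul_of_nonneg_left (hterm i hi) (hw0 i hi)
    _ = 16 - ∑ i ∈ s, w i * ‖F i + y‖ ^ 4 := by
        simp only [mul_sub, Finset.sum_sub_distrib, ← Finset.sum_mul, hw1, one_mul]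
    _ ≤ 16 - (∑ i ∈ s, w i * ‖F i + y‖) ^ 4 :=
        sub_le_sub_left (Real.pow_arith_mean_le_arith_mean_pow s w _ hw0 hw1
          (fun _ _ => norm_nonneg _) 4) 16
    _ ≤ 16 - ‖∑ i ∈ s, w i • F i + y‖ ^ 4 :=
        sub_le_sub_left (pow_le_pow_left₀ (norm_nonneg _) htri 4) 16

theorem le_one_sub_two_zpow_neg_five_mul (a : ℝ) :
    a ≤ 1 - 2 ^ (-5 : ℤ) * (16 - (a + 1) ^ 4) := by
  have key : 1 - 2 ^ (-5 : ℤ) * (16 - (a + 1) ^ 4) - a = (1 - a) ^ 2 * ((a + 3) ^ 2 + 8) / 32 := by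
    norm_num
    ring
  exact sub_nonneg.1 (key ▸ by positivity)

theorem exists_norm_eq_one_norm_sum_smul_le
    (hC : ∀ u v : E, ‖u - v‖ ^ 4 + ‖u + v‖ ^ 4 ≤ 8 * ‖u‖ ^ 4 + 8 * ‖v‖ ^ 4)
    {s : Finset ι} {w : ι → ℝ} (hw0 : ∀ i ∈ s, 0 ≤ w i) (hw1 : ∑ i ∈ s, w i = 1)
    {F : ι → E} (hF : ∀ i ∈ s, ‖F i‖ = 1) :
    ∃ y : E, ‖y‖ = 1 ∧
      ‖∑ i ∈ s, w i • F i‖ ≤ 1 - 2 ^ (-5 : ℤ) * ∑ i ∈ s, w i * ‖F i - y‖ ^ 4 := by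
  obtain ⟨i, hi⟩ : s.Nonempty := Finset.nonempty_of_sum_ne_zero (hw1 ▸ one_ne_zero)
  obtain ⟨y, hy, hnorm⟩ := exists_norm_eq_one_and_norm_add_eq (∑ i ∈ s, w i • F i) (F i) (hF i hi)
  have hsum := sum_mul_norm_sub_pow_four_le hC hw0 hw1 hF hy
  rw [hnorm] at hsum
  refine ⟨y, hy, (le_one_sub_two_zpow_neg_five_mul _).trans ?_⟩
  gcongr

end UniformConvexity

theorem statement4_general {H : Type} [Group H] {X : Type} [MeasurableSpace X]
    (ν : Measure X)
    [MulAction H X]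
    (hmp : ∀ g : H, MeasurePreserving (fun x => g • x) ν ν)
    (s : Finset H) (w : H → ℝ)
    (hw0 : ∀ g, 0 ≤ w g) (hw1 : ∑ g ∈ s, w g = 1)
    (f : X → ℂ) (hf : MemLp f 4 ν) (hf4 : eLpNorm f 4 ν = 1) :
    (eLpNorm (fun x => ∑ g ∈ s, (w g : ℂ) * f (g⁻¹ • x)) 4 ν).toReal ≤
      1 - (2 : ℝ) ^ (-5 : ℤ) * sInf {r : ℝ | ∃ f₀ : X → ℂ,
        MemLp f₀ 4 ν ∧ eLpNorm f₀ 4 ν = 1 ∧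
        r = ∑ g ∈ s, w g * (eLpNorm (fun x => f (g⁻¹ • x) - f₀ x) 4 ν).toReal ^ 4} := by
  have hmem (g : H) : MemLp (fun x => f (g⁻¹ • x)) 4 ν := hf.comp_measurePreserving (hmp g⁻¹)
  have hnorm (g : H) : ‖(hmem g).toLp _‖ = 1 := by
    rw [Lp.norm_toLp, ← Function.comp_def,
      eLpNorm_comp_measurePreserving hf.aestronglyMeasurable (hmp g⁻¹), hf4, ENNReal.toReal_one]
  have : Fact ((1 : ℝ≥0∞) ≤ 4) := ⟨by norm_num⟩
  obtain ⟨f₀, hf₀, hle⟩ := exists_norm_eq_one_norm_sum_smul_le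
    Lp.norm_sub_pow_four_add_norm_add_pow_four_le (fun g _ => hw0 g) hw1 (fun g _ => hnorm g)
  rw [Lp.norm_sum_smul_toLp s w hmem] at hle
  simp only [Complex.real_smul] at hle
  refine hle.trans (sub_le_sub_left (mul_le_mul_of_nonneg_left (csInf_le ?_ ?_) (by positivity)) 1)
  · exact ⟨0, fun r ⟨_, _, _, hr⟩ =>
      hr ▸ Finset.sum_nonneg fun g _ => mul_nonneg (hw0 g) (by positivity)⟩
  · refine ⟨f₀, Lp.memLp f₀, by rw [← Lp.enorm_def, ← ofReal_norm, hf₀, ENNReal.ofReal_one], ?_⟩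
    simp only [Lp.norm_toLp_sub]

/-- (Clarkson uniform convexity estimate.) Let a group `H` act by
measure-preserving bijections on a probability space `(X,ν)` and let `μ` be a finitely
supported probability measure on `H`.  Then for every `f ∈ L⁴(ν)` with `‖f‖_{L⁴} = 1`,
`‖π(μ)f‖_{L⁴} ≤ 1 − 2^{−5} · inf_{‖f₀‖_{L⁴}=1} Σ_g μ(g)·‖π(g)f − f₀‖_{L⁴}^4`. -/
theorem statement4 {H : Type} [Group H] {X : Type} [MeasurableSpace X]
    (ν : Measure X) [IsProbabilityMeasure ν]
    [MulAction H X]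
    (hmp : ∀ g : H, MeasurePreserving (fun x => g • x) ν ν)
    (s : Finset H) (w : H → ℝ)
    (hw0 : ∀ g, 0 ≤ w g) (hw1 : ∑ g ∈ s, w g = 1) (hwsupp : ∀ g ∉ s, w g = 0)
    (f : X → ℂ) (hf : MemLp f 4 ν) (hf4 : eLpNorm f 4 ν = 1) :
    (eLpNorm (fun x => ∑ g ∈ s, (w g : ℂ) * f (g⁻¹ • x)) 4 ν).toReal ≤
      1 - (2 : ℝ) ^ (-5 : ℤ) * sInf {r : ℝ | ∃ f₀ : X → ℂ,
        MemLp f₀ 4 ν ∧ eLpNorm f₀ 4 ν = 1 ∧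
        r = ∑ g ∈ s, w g * (eLpNorm (fun x => f (g⁻¹ • x) - f₀ x) 4 ν).toReal ^ 4} :=
  statement4_general ν hmp s w hw0 hw1 f hf hf4
end

section
/- Let H be a group acting by measure-preserving measurable bijections on a probability space (X,ν) (i.e. ν(X) = 1), and let μ be a finitely supported symmetric probability measure on H. Then for every f ∈ L⁴(ν) with ‖f‖_{L⁴} = 1, one has 2^7 · (1 − ‖π(μ)f‖_{L⁴}) ≥ (1 − ‖π(μ)φ(f)‖_{L²})², where φ is the Mazur map. -/
/-!
At each point the estimate reduces to an inequality for a convex combination `m = ∑ wᵢ aᵢ` in a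
real inner product space. Jensen's inequality for `‖·‖⁴`, applied twice, gives
`16 ‖m‖⁴ ≤ ∑ᵢ ∑ⱼ wᵢ wⱼ ‖aᵢ + aⱼ‖⁴`, and the two-point inequality
`‖a + b‖⁴ ≤ 4 (‖a‖⁴ + ‖b‖⁴) + 8 ⟪φ a, φ b⟫` (with `φ a = ‖a‖ • a`) bounds the right-hand side by
`8 (∑ wᵢ ‖aᵢ‖⁴ + ‖∑ wᵢ φ aᵢ‖²)`. Taking `a_g = f (g⁻¹ • x)` and integrating, measure preservation
gives `2 ‖π(μ) f‖₄⁴ ≤ ‖f‖₄⁴ + ‖π(μ) φ(f)‖₂² = 1 + t²`, where `t ≤ ‖φ(f)‖₂ = 1` because `π(μ)` is a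
contraction. Hence `(1 - t)² ≤ 1 - t² ≤ 2 (1 - ‖π(μ) f‖₄⁴) ≤ 8 (1 - ‖π(μ) f‖₄)`.
-/

open MeasureTheory

/-- The Mazur map `φ(f) = |f|²·sign(f)`, where `sign(f) = f/|f|` when `f ≠ 0` and `0`
otherwise. -/
noncomputable def mazur {X : Type} (f : X → ℂ) : X → ℂ :=
  fun x => if f x = 0 then 0 else ((‖f x‖ : ℂ)) ^ 2 * (f x / (‖f x‖ : ℂ))

open scoped ENNReal RealInnerProductSpace

section InnerProductSpace

variable {E : Type*} [NormedAddCommGroup E] [InnerProductSpace ℝ E]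

lemma norm_add_pow_four_le (a b : E) :
    ‖a + b‖ ^ 4 ≤ 4 * (‖a‖ ^ 4 + ‖b‖ ^ 4) + 8 * ⟪‖a‖ • a, ‖b‖ • b⟫ := by
  have hinner : ⟪‖a‖ • a, ‖b‖ • b⟫ = ‖a‖ * ‖b‖ * ⟪a, b⟫ := by
    rw [real_inner_smul_left, real_inner_smul_right]; ring
  have hcs : ⟪a, b⟫ ≤ ‖a‖ * ‖b‖ := real_inner_le_norm a b
  have hcs' : -(‖a‖ * ‖b‖) ≤ ⟪a, b⟫ := neg_le_of_abs_le (abs_real_inner_le_norm a b)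
  have hsq : ‖a + b‖ ^ 4 = (‖a‖ ^ 2 + ‖b‖ ^ 2 + 2 * ⟪a, b⟫) ^ 2 := by
    rw [show 4 = 2 * 2 from rfl, pow_mul, norm_add_sq_real]; ring
  rw [hsq, hinner]
  -- with `p = ‖a‖`, `q = ‖b‖`, `c = ⟪a, b⟫` the difference of the two sides is
  -- `(p - q)² (3 p² + 2 p q + 3 q²) + 4 (p q - c) (p - q)² + 4 (p² q² - c²)`
  nlinarith [mul_nonneg (sub_nonneg.2 hcs) (sq_nonneg (‖a‖ - ‖b‖)),
    mul_nonneg (sub_nonneg.2 hcs) (neg_le_iff_add_nonneg.1 hcs'),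
    mul_nonneg (sq_nonneg (‖a‖ - ‖b‖))
      (by positivity : 0 ≤ 3 * ‖a‖ ^ 2 + 2 * ‖a‖ * ‖b‖ + 3 * ‖b‖ ^ 2)]

variable {ι : Type*} {s : Finset ι} {w : ι → ℝ}

lemma norm_sum_smul_pow_le (hw0 : ∀ i ∈ s, 0 ≤ w i) (hw1 : ∑ i ∈ s, w i = 1) (v : ι → E)
    (n : ℕ) : ‖∑ i ∈ s, w i • v i‖ ^ n ≤ ∑ i ∈ s, w i * ‖v i‖ ^ n := by
  have hconv : ConvexOn ℝ Set.univ (fun x : E => ‖x‖ ^ n) :=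
    convexOn_univ_norm.pow (fun x _ => norm_nonneg x) n
  simpa using hconv.map_sum_le hw0 hw1 (fun i _ => Set.mem_univ (v i))

lemma norm_sum_smul_sq (v : ι → E) :
    ‖∑ i ∈ s, w i • v i‖ ^ 2 = ∑ i ∈ s, ∑ j ∈ s, w i * w j * ⟪v i, v j⟫ := by
  rw [← real_inner_self_eq_norm_sq, sum_inner]
  refine Finset.sum_congr rfl fun i _ => ?_
  rw [inner_sum]
  refine Finset.sum_congr rfl fun j _ => ?_
  rw [real_inner_smul_left, real_inner_smul_right]; ring

lemma sum_smul_add_const (hw1 : ∑ i ∈ s, w i = 1) (v : ι → E) (c : E) :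
    ∑ i ∈ s, w i • (v i + c) = ∑ i ∈ s, w i • v i + c := by
  simp only [smul_add, Finset.sum_add_distrib, ← Finset.sum_smul, hw1, one_smul]

lemma two_mul_norm_sum_smul_pow_four_le (hw0 : ∀ i ∈ s, 0 ≤ w i) (hw1 : ∑ i ∈ s, w i = 1)
    (a : ι → E) :
    2 * ‖∑ i ∈ s, w i • a i‖ ^ 4 ≤
      ∑ i ∈ s, w i * ‖a i‖ ^ 4 + ‖∑ i ∈ s, w i • (‖a i‖ • a i)‖ ^ 2 := by
  set m := ∑ i ∈ s, w i • a i
  have hjensen : ‖m + m‖ ^ 4 ≤ ∑ i ∈ s, w i * ∑ j ∈ s, w j * ‖a j + a i‖ ^ 4 :=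
    calc ‖m + m‖ ^ 4 = ‖∑ i ∈ s, w i • (a i + m)‖ ^ 4 := by rw [sum_smul_add_const hw1]
      _ ≤ ∑ i ∈ s, w i * ‖a i + m‖ ^ 4 := norm_sum_smul_pow_le hw0 hw1 _ 4
      _ = ∑ i ∈ s, w i * ‖∑ j ∈ s, w j • (a j + a i)‖ ^ 4 := by
        refine Finset.sum_congr rfl fun i _ => ?_
        rw [sum_smul_add_const hw1, add_comm]
      _ ≤ ∑ i ∈ s, w i * ∑ j ∈ s, w j * ‖a j + a i‖ ^ 4 :=
        Finset.sum_le_sum fun i hi => mul_le_mul_of_nonneg_left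
          (norm_sum_smul_pow_le hw0 hw1 _ 4) (hw0 i hi)
  have hpair : ∑ i ∈ s, w i * ∑ j ∈ s, w j * ‖a j + a i‖ ^ 4 ≤
      ∑ i ∈ s, ∑ j ∈ s, w i * w j *
        (4 * (‖a j‖ ^ 4 + ‖a i‖ ^ 4) + 8 * ⟪‖a j‖ • a j, ‖a i‖ • a i⟫) := by
    simp only [Finset.mul_sum, ← mul_assoc]
    exact Finset.sum_le_sum fun i hi => Finset.sum_le_sum fun j hj =>
      mul_le_mul_of_nonneg_left (norm_add_pow_four_le _ _) (mul_nonneg (hw0 i hi) (hw0 j hj))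
  have hexpand : ∑ i ∈ s, ∑ j ∈ s, w i * w j *
        (4 * (‖a j‖ ^ 4 + ‖a i‖ ^ 4) + 8 * ⟪‖a j‖ • a j, ‖a i‖ • a i⟫) =
      8 * (∑ i ∈ s, w i * ‖a i‖ ^ 4 + ‖∑ i ∈ s, w i • (‖a i‖ • a i)‖ ^ 2) := by
    have hdiag : ∀ x : ι → ℝ, ∑ i ∈ s, ∑ j ∈ s, w i * w j * x i = ∑ i ∈ s, w i * x i :=
      fun x => by simp_rw [mul_right_comm (w _) (w _), ← Finset.mul_sum, hw1, mul_one]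
    have hdiag' : ∀ x : ι → ℝ, ∑ i ∈ s, ∑ j ∈ s, w i * w j * x j = ∑ i ∈ s, w i * x i :=
      fun x => by rw [Finset.sum_comm]; simp_rw [mul_comm (w _) (w _)]; exact hdiag x
    calc _ = ∑ i ∈ s, ∑ j ∈ s, (4 * (w i * w j * ‖a j‖ ^ 4) + 4 * (w i * w j * ‖a i‖ ^ 4)
            + 8 * (w i * w j * ⟪‖a i‖ • a i, ‖a j‖ • a j⟫)) :=
          Finset.sum_congr rfl fun i _ => Finset.sum_congr rfl fun j _ => by
            rw [real_inner_comm]; ring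
      _ = _ := by
        simp only [Finset.sum_add_distrib, ← Finset.mul_sum, hdiag, hdiag', norm_sum_smul_sq]
        ring
  have hdouble : ‖m + m‖ ^ 4 = 16 * ‖m‖ ^ 4 := by
    rw [← two_smul ℝ m, norm_smul]; norm_num; ring
  linarith

end InnerProductSpace

section Mazur

variable {X : Type}

lemma mazur_apply (f : X → ℂ) (x : X) : mazur f x = ‖f x‖ • f x := by
  rw [mazur, Complex.real_smul]
  split_ifs with h
  · simp [h]
  · have : (‖f x‖ : ℂ) ≠ 0 := by simpa using h
    field_simp

lemma norm_mazur_apply (f : X → ℂ) (x : X) : ‖mazur f x‖ = ‖f x‖ ^ 2 := by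
  rw [mazur_apply, norm_smul, norm_norm, sq]

lemma eLpNorm_mazur [MeasurableSpace X] {ν : Measure X} (f : X → ℂ) :
    eLpNorm (mazur f) 2 ν = eLpNorm f 4 ν ^ 2 := by
  have h := eLpNorm_norm_rpow (p := 2) (μ := ν) f (q := 2) two_pos
  norm_num at h
  rw [← h]
  exact eLpNorm_congr_norm_ae (.of_forall fun x => by simp [norm_mazur_apply])

lemma aestronglyMeasurable_mazur [MeasurableSpace X] {ν : Measure X} {f : X → ℂ}
    (hf : AEStronglyMeasurable f ν) : AEStronglyMeasurable (mazur f) ν := by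
  rw [show mazur f = fun x => ‖f x‖ • f x from funext (mazur_apply f)]
  exact hf.norm.smul hf

end Mazur

section Action

variable {H : Type*} {X : Type} [Group H] [MulAction H X] {s : Finset H} {w : H → ℝ}

/-- `π(μ) u` for the measure `μ = ∑ g ∈ s, w g • δ_g` on `H`. -/
noncomputable def actionAvg (s : Finset H) (w : H → ℝ) (u : X → ℂ) : X → ℂ :=
  fun x => ∑ g ∈ s, (w g : ℂ) * u (g⁻¹ • x)

lemma two_mul_enorm_actionAvg_pow_four_le (hw0 : ∀ g ∈ s, 0 ≤ w g)
    (hw1 : ∑ g ∈ s, w g = 1) (f : X → ℂ) (x : X) :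
    2 * ‖actionAvg s w f x‖ₑ ^ 4 ≤
      ∑ g ∈ s, ENNReal.ofReal (w g) * ‖f (g⁻¹ • x)‖ₑ ^ 4 + ‖actionAvg s w (mazur f) x‖ₑ ^ 2 := by
  have h := two_mul_norm_sum_smul_pow_four_le hw0 hw1 (fun g => f (g⁻¹ • x))
  have hmazur : ∀ g : H, ‖f (g⁻¹ • x)‖ • f (g⁻¹ • x) = mazur f (g⁻¹ • x) :=
    fun g => (mazur_apply f _).symm
  simp only [hmazur, Complex.real_smul] at h
  have h4 : ∀ g ∈ s, 0 ≤ w g * ‖f (g⁻¹ • x)‖ ^ 4 := fun g hg => by have := hw0 g hg; positivity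
  calc 2 * ‖actionAvg s w f x‖ₑ ^ 4 = ENNReal.ofReal (2 * ‖actionAvg s w f x‖ ^ 4) := by
        rw [ENNReal.ofReal_mul zero_le_two, ENNReal.ofReal_pow (norm_nonneg _), ofReal_norm,
          ENNReal.ofReal_ofNat]
    _ ≤ ENNReal.ofReal (∑ g ∈ s, w g * ‖f (g⁻¹ • x)‖ ^ 4 + ‖actionAvg s w (mazur f) x‖ ^ 2) :=
        ENNReal.ofReal_le_ofReal h
    _ = _ := by
        rw [ENNReal.ofReal_add (Finset.sum_nonneg h4) (sq_nonneg _),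
          ENNReal.ofReal_sum_of_nonneg h4, ENNReal.ofReal_pow (norm_nonneg _), ofReal_norm]
        congr 1
        refine Finset.sum_congr rfl fun g hg => ?_
        rw [ENNReal.ofReal_mul (hw0 g hg), ENNReal.ofReal_pow (norm_nonneg _), ofReal_norm]

variable [MeasurableSpace X] {ν : Measure X} (hmp : ∀ g : H, MeasurePreserving (fun x => g • x) ν ν)
include hmp

lemma eLpNorm_comp_inv_smul {u : X → ℂ} (hu : AEStronglyMeasurable u ν) (p : ℝ≥0∞) (g : H) :
    eLpNorm (fun x => u (g⁻¹ • x)) p ν = eLpNorm u p ν :=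
  eLpNorm_comp_measurePreserving hu (hmp g⁻¹)

lemma eLpNorm_actionAvg_le (hw0 : ∀ g ∈ s, 0 ≤ w g) (hw1 : ∑ g ∈ s, w g = 1) {u : X → ℂ}
    (hu : AEStronglyMeasurable u ν) {p : ℝ≥0∞} (hp : 1 ≤ p) :
    eLpNorm (actionAvg s w u) p ν ≤ eLpNorm u p ν := by
  have hterm : ∀ g ∈ s, eLpNorm (fun x => (w g : ℂ) * u (g⁻¹ • x)) p ν ≤
      ENNReal.ofReal (w g) * eLpNorm u p ν := fun g hg => by
    have h := eLpNorm_const_smul_le (c := (w g : ℂ)) (f := fun x => u (g⁻¹ • x)) (p := p) (μ := ν)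
    rwa [eLpNorm_comp_inv_smul hmp hu, ← ofReal_norm, Complex.norm_real,
      Real.norm_of_nonneg (hw0 g hg)] at h
  have hsum : actionAvg s w u = ∑ g ∈ s, fun x => (w g : ℂ) * u (g⁻¹ • x) := by
    ext x; simp [actionAvg, Finset.sum_apply]
  calc eLpNorm (actionAvg s w u) p ν
      ≤ ∑ g ∈ s, eLpNorm (fun x => (w g : ℂ) * u (g⁻¹ • x)) p ν := hsum ▸
        eLpNorm_sum_le (fun g _ => ((hu.comp_measurePreserving (hmp g⁻¹)).const_mul _)) hp
    _ ≤ ∑ g ∈ s, ENNReal.ofReal (w g) * eLpNorm u p ν := Finset.sum_le_sum hterm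
    _ = eLpNorm u p ν := by
      rw [← Finset.sum_mul, ← ENNReal.ofReal_sum_of_nonneg hw0, hw1,
        ENNReal.ofReal_one, one_mul]

lemma two_mul_eLpNorm_actionAvg_pow_four_le (hw0 : ∀ g ∈ s, 0 ≤ w g) (hw1 : ∑ g ∈ s, w g = 1)
    {f : X → ℂ} (hf : AEStronglyMeasurable f ν) :
    2 * eLpNorm (actionAvg s w f) 4 ν ^ 4 ≤
      eLpNorm f 4 ν ^ 4 + eLpNorm (actionAvg s w (mazur f)) 2 ν ^ 2 := by
  have hpow4 : ∀ u : X → ℂ, eLpNorm u 4 ν ^ 4 = ∫⁻ x, ‖u x‖ₑ ^ 4 ∂ν := fun u => by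
    simpa using eLpNorm_nnreal_pow_eq_lintegral (f := u) (μ := ν) (p := 4) (by norm_num)
  have hpow2 : ∀ u : X → ℂ, eLpNorm u 2 ν ^ 2 = ∫⁻ x, ‖u x‖ₑ ^ 2 ∂ν := fun u => by
    simpa using eLpNorm_nnreal_pow_eq_lintegral (f := u) (μ := ν) (p := 2) (by norm_num)
  have hmeas : ∀ g ∈ s, AEMeasurable (fun x => ENNReal.ofReal (w g) * ‖f (g⁻¹ • x)‖ₑ ^ 4) ν :=
    fun g _ => ((hf.comp_measurePreserving (hmp g⁻¹)).enorm.pow_const 4).const_mul _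
  calc 2 * eLpNorm (actionAvg s w f) 4 ν ^ 4 = ∫⁻ x, 2 * ‖actionAvg s w f x‖ₑ ^ 4 ∂ν := by
        rw [hpow4, lintegral_const_mul' _ _ ENNReal.ofNat_ne_top]
    _ ≤ ∫⁻ x, (∑ g ∈ s, ENNReal.ofReal (w g) * ‖f (g⁻¹ • x)‖ₑ ^ 4 +
          ‖actionAvg s w (mazur f) x‖ₑ ^ 2) ∂ν :=
        lintegral_mono (two_mul_enorm_actionAvg_pow_four_le hw0 hw1 f)
    _ = ∑ g ∈ s, ENNReal.ofReal (w g) * eLpNorm (fun x => f (g⁻¹ • x)) 4 ν ^ 4 +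
          eLpNorm (actionAvg s w (mazur f)) 2 ν ^ 2 := by
        rw [lintegral_add_left' (Finset.aemeasurable_fun_sum _ hmeas), lintegral_finsetSum' _ hmeas,
          hpow2]
        simp only [hpow4, lintegral_const_mul' _ _ ENNReal.ofReal_ne_top]
    _ = eLpNorm f 4 ν ^ 4 + eLpNorm (actionAvg s w (mazur f)) 2 ν ^ 2 := by
        simp only [eLpNorm_comp_inv_smul hmp hf, ← Finset.sum_mul,
          ← ENNReal.ofReal_sum_of_nonneg hw0, hw1, ENNReal.ofReal_one, one_mul]

end Action

lemma one_sub_sq_le_of_two_mul_pow_four_le {a b : ℝ} (ha : 0 ≤ a) (hb0 : 0 ≤ b) (hb1 : b ≤ 1)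
    (h : 2 * a ^ 4 ≤ 1 + b ^ 2) : (1 - b) ^ 2 ≤ 8 * (1 - a) := by
  have ha1 : a ≤ 1 := by
    refine (pow_le_one_iff_of_nonneg ha (n := 4) (by norm_num)).1 ?_
    nlinarith [pow_le_one₀ (n := 2) hb0 hb1]
  calc (1 - b) ^ 2 ≤ 1 - b ^ 2 := by nlinarith
    _ ≤ 2 * (1 - a ^ 4) := by linarith
    _ ≤ 8 * (1 - a) := by
      nlinarith [mul_nonneg (sub_nonneg.2 ha1) (pow_nonneg ha 3), mul_nonneg ha (sub_nonneg.2 ha1),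
        mul_nonneg (pow_nonneg ha 2) (sub_nonneg.2 ha1)]

lemma one_sub_toReal_sq_le {A B : ℝ≥0∞} (hB : B ≤ 1) (h : 2 * A ^ 4 ≤ 1 + B ^ 2) :
    (1 - B.toReal) ^ 2 ≤ 8 * (1 - A.toReal) := by
  have hBtop : B ≠ ⊤ := ne_top_of_le_ne_top ENNReal.one_ne_top hB
  have hreal := ENNReal.toReal_mono (by finiteness) h
  rw [ENNReal.toReal_mul, ENNReal.toReal_add ENNReal.one_ne_top (by finiteness),
    ENNReal.toReal_pow, ENNReal.toReal_pow, ENNReal.toReal_ofNat, ENNReal.toReal_one] at hreal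
  exact one_sub_sq_le_of_two_mul_pow_four_le A.toReal_nonneg B.toReal_nonneg
    (ENNReal.toReal_le_of_le_ofReal zero_le_one (by simpa using hB)) hreal

theorem statement5_general {H : Type} [Group H] {X : Type} [MeasurableSpace X]
    (ν : Measure X)
    [MulAction H X]
    (hmp : ∀ g : H, MeasurePreserving (fun x => g • x) ν ν)
    (s : Finset H) (w : H → ℝ)
    (hw0 : ∀ g, 0 ≤ w g) (hw1 : ∑ g ∈ s, w g = 1)
    (f : X → ℂ) (hf : MemLp f 4 ν) (hf4 : eLpNorm f 4 ν = 1) :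
    (1 - (eLpNorm (fun x => ∑ g ∈ s, (w g : ℂ) * mazur f (g⁻¹ • x)) 2 ν).toReal) ^ 2 ≤
      2 ^ 7 *
        (1 - (eLpNorm (fun x => ∑ g ∈ s, (w g : ℂ) * f (g⁻¹ • x)) 4 ν).toReal) := by
  change (1 - (eLpNorm (actionAvg s w (mazur f)) 2 ν).toReal) ^ 2 ≤
    2 ^ 7 * (1 - (eLpNorm (actionAvg s w f) 4 ν).toReal)
  have hw0' : ∀ g ∈ s, 0 ≤ w g := fun g _ => hw0 g
  have hcontr : eLpNorm (actionAvg s w (mazur f)) 2 ν ≤ 1 :=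
    calc _ ≤ eLpNorm (mazur f) 2 ν :=
          eLpNorm_actionAvg_le hmp hw0' hw1 (aestronglyMeasurable_mazur hf.1) one_le_two
      _ = 1 := by rw [eLpNorm_mazur, hf4, one_pow]
  have hkey := two_mul_eLpNorm_actionAvg_pow_four_le hmp hw0' hw1 hf.1
  rw [hf4, one_pow] at hkey
  linarith [one_sub_toReal_sq_le hcontr hkey,
    sq_nonneg (1 - (eLpNorm (actionAvg s w (mazur f)) 2 ν).toReal)]

/-- (Lemma `L4L2`.) Let a group `H` act by measure-preserving bijections on
a probability space `(X,ν)` and let `μ` be a finitely supported symmetric probability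
measure on `H`.  Then for every `f ∈ L⁴(ν)` with `‖f‖_{L⁴} = 1`,
`2^7·(1 − ‖π(μ)f‖_{L⁴}) ≥ (1 − ‖π(μ)φ(f)‖_{L²})²`, where `φ` is the Mazur map. -/
theorem statement5 {H : Type} [Group H] {X : Type} [MeasurableSpace X]
    (ν : Measure X) [IsProbabilityMeasure ν]
    [MulAction H X]
    (hmp : ∀ g : H, MeasurePreserving (fun x => g • x) ν ν)
    (s : Finset H) (w : H → ℝ)
    (hw0 : ∀ g, 0 ≤ w g) (hw1 : ∑ g ∈ s, w g = 1) (hwsupp : ∀ g ∉ s, w g = 0)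
    (hsym : ∀ g : H, w g⁻¹ = w g)
    (f : X → ℂ) (hf : MemLp f 4 ν) (hf4 : eLpNorm f 4 ν = 1) :
    (1 - (eLpNorm (fun x => ∑ g ∈ s, (w g : ℂ) * mazur f (g⁻¹ • x)) 2 ν).toReal) ^ 2 ≤
      2 ^ 7 *
        (1 - (eLpNorm (fun x => ∑ g ∈ s, (w g : ℂ) * f (g⁻¹ • x)) 4 ν).toReal) :=
  statement5_general ν hmp s w hw0 hw1 f hf hf4
end

section
/- For every real number a ≥ 1 and every complex number θ with |θ| = 1, one has |a² − θ| ≥ (1/2)·|a − θ|². -/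
/-!
For `a ≥ 0` and `|θ| = 1` one has `(a + 1)|a − θ| ≤ 2|a² − θ|`: squaring and writing `x = Re θ`,
the difference `4|a² − θ|² − (a + 1)²|a − θ|²` equals `(a − 1)²(3a² + 2a + 3) + 2a(a − 1)²(x + 1)`.
Together with `|a − θ| ≤ a + 1` this gives `|a − θ|² ≤ (a + 1)|a − θ| ≤ 2|a² − θ|`.
-/

namespace Complex

lemma norm_ofReal_sub_sq (r : ℝ) (θ : ℂ) :
    ‖(r : ℂ) - θ‖ ^ 2 = r ^ 2 - 2 * r * θ.re + ‖θ‖ ^ 2 := by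
  simp only [Complex.sq_norm, normSq_sub, normSq_ofReal, re_ofReal_mul, conj_re]
  ring

lemma norm_ofReal_sub_le_add_one {a : ℝ} (ha : 0 ≤ a) {θ : ℂ} (hθ : ‖θ‖ = 1) :
    ‖(a : ℂ) - θ‖ ≤ a + 1 := by
  simpa [abs_of_nonneg ha, hθ] using norm_sub_le (a : ℂ) θ

lemma add_one_mul_norm_ofReal_sub_le {a : ℝ} (ha : 0 ≤ a) {θ : ℂ} (hθ : ‖θ‖ = 1) :
    (a + 1) * ‖(a : ℂ) - θ‖ ≤ 2 * ‖(a : ℂ) ^ 2 - θ‖ := by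
  have hre : 0 ≤ θ.re + 1 := by
    linarith [(abs_le.mp (hθ ▸ abs_re_le_norm θ)).1]
  have hsq : ((a : ℂ) ^ 2 - θ) = ((a ^ 2 : ℝ) : ℂ) - θ := by push_cast; ring
  rw [← pow_le_pow_iff_left₀ (by positivity) (by positivity) two_ne_zero, mul_pow, mul_pow, hsq,
    norm_ofReal_sub_sq, norm_ofReal_sub_sq, hθ]
  have key : 2 ^ 2 * ((a ^ 2) ^ 2 - 2 * a ^ 2 * θ.re + 1 ^ 2)
      - (a + 1) ^ 2 * (a ^ 2 - 2 * a * θ.re + 1 ^ 2)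
      = (a - 1) ^ 2 * (3 * a ^ 2 + 2 * a + 3) + 2 * a * (a - 1) ^ 2 * (θ.re + 1) := by ring
  rw [← sub_nonneg, key]
  positivity

end Complex

/-- For every real `a ≥ 1` and every complex `θ` with `|θ| = 1`,
`|a² − θ| ≥ (1/2)·|a − θ|²`. -/
theorem statement6 (a : ℝ) (ha : 1 ≤ a) (θ : ℂ) (hθ : ‖θ‖ = 1) :
    (1 / 2) * ‖(a : ℂ) - θ‖ ^ 2 ≤ ‖(a : ℂ) ^ 2 - θ‖ := by
  have ha₀ : 0 ≤ a := by linarith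
  calc (1 / 2) * ‖(a : ℂ) - θ‖ ^ 2 = (1 / 2) * (‖(a : ℂ) - θ‖ * ‖(a : ℂ) - θ‖) := by ring
    _ ≤ (1 / 2) * ((a + 1) * ‖(a : ℂ) - θ‖) := by
        gcongr; exact Complex.norm_ofReal_sub_le_add_one ha₀ hθ
    _ ≤ ‖(a : ℂ) ^ 2 - θ‖ := by
        linarith [Complex.add_one_mul_norm_ofReal_sub_le ha₀ hθ]
end

section
/- Let η be a probability measure on F_p^d and let ψ be the restriction of the Fourier transform η̂ to X = F_p^d ∖ {0} (extended by 0 at 0). Suppose that η(x) ≤ (40/41)·‖η‖_{L²} for every x ∈ F_p^d, and that ‖ψ‖_{L̂⁴} ≥ 4 p^{−d/4}. Then ‖ |ψ|/‖ψ‖_{L̂⁴} − (p^d/(p^d−1))^{1/4} ‖_{L̂⁴} ≥ 1/16, where (p^d/(p^d−1))^{1/4} denotes the function on F_p^d equal to this constant on X and equal to 0 at 0. -/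
/-!
Write `F = η̂`, `N = p^d` and `u = |ψ| / ‖ψ‖_{L̂⁴}` on `X`, so that `N⁻¹ ∑_X u⁴ = 1`.
By Parseval and `(η ∗ η)^ = F²`, the sums `∑ |F|²` and `∑ |F|⁴` are `N ‖η‖₂²` and `N` times the
additive energy `∑ₓ (η ∗ η)(x)²`. Counting only the solutions of `y + y' = z + z'` with
`{z, z'} = {y, y'}`, the atom bound `η(x)² ≤ (40/41)² ‖η‖₂²` makes the energy at least
`(2 - (40/41)²) ‖η‖₂⁴`; as `F(0) = 1` and `∑_X |F|⁴ ≥ 256`, this bounds the mean `m` of `u²` on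
`F_p^d` by `(2 - (40/41)²) m² ≤ 257/256`.

On the other hand `c = (N/(N-1))^{1/4}` is the constant on `X` with the same `L̂⁴` norm as `u`, so
`∑_X (u² - c²)² = 2N (1 - c² m)`, while Cauchy–Schwarz applied to `(u² - c²)² = (u - c)² (u + c)²`
bounds this by `4N ε²` with `ε = ‖u - c‖_{L̂⁴}`. Hence `c² m ≥ 1 - 2ε²`, and `ε < 1/16` would
contradict the upper bound on `m`.
-/

open scoped BigOperators Matrix

namespace Paper

abbrev V (p d : ℕ) : Type := Fin d → ZMod p
abbrev SL (p d : ℕ) : Type := Matrix.SpecialLinearGroup (Fin d) (ZMod p)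

/-- The group `F_p^d ⋊ SL_d(F_p)` with multiplication
`(v₁,θ₁)·(v₂,θ₂) = (v₁+θ₁v₂, θ₁θ₂)`. -/
def Aff (p d : ℕ) : Type := V p d × SL p d

namespace Aff

variable {p d : ℕ}

/-- the translation part `v(g)` -/
def vec (g : Aff p d) : V p d := g.1

/-- the linear part `θ(g)` -/
def lin (g : Aff p d) : SL p d := g.2

def mk (v : V p d) (θ : SL p d) : Aff p d := (v, θ)

instance : Mul (Aff p d) :=
  ⟨fun g h => (g.1 + (g.2 : Matrix (Fin d) (Fin d) (ZMod p)) *ᵥ h.1, g.2 * h.2)⟩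

instance : One (Aff p d) := ⟨((0 : V p d), (1 : SL p d))⟩

instance : Inv (Aff p d) :=
  ⟨fun g => (-(((g.2)⁻¹ : SL p d) : Matrix (Fin d) (Fin d) (ZMod p)) *ᵥ g.1, (g.2)⁻¹)⟩

lemma mul_def (g h : Aff p d) :
    g * h = (g.1 + (g.2 : Matrix (Fin d) (Fin d) (ZMod p)) *ᵥ h.1, g.2 * h.2) := rfl

instance : Group (Aff p d) where
  mul_assoc a b c := by
    refine Prod.ext ?_ ?_
    · show (a.1 + (a.2 : Matrix (Fin d) (Fin d) (ZMod p)) *ᵥ b.1) +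
        ((a.2 * b.2 : SL p d) : Matrix (Fin d) (Fin d) (ZMod p)) *ᵥ c.1 =
        a.1 + (a.2 : Matrix (Fin d) (Fin d) (ZMod p)) *ᵥ
          (b.1 + (b.2 : Matrix (Fin d) (Fin d) (ZMod p)) *ᵥ c.1)
      simp [Matrix.mulVec_add, Matrix.mulVec_mulVec, add_assoc]
    · show a.2 * b.2 * c.2 = a.2 * (b.2 * c.2)
      exact mul_assoc _ _ _
  one_mul a := by
    refine Prod.ext ?_ ?_
    · show (0 : V p d) + ((1 : SL p d) : Matrix (Fin d) (Fin d) (ZMod p)) *ᵥ a.1 = a.1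
      simp
    · show (1 : SL p d) * a.2 = a.2
      exact one_mul _
  mul_one a := by
    refine Prod.ext ?_ ?_
    · show a.1 + (a.2 : Matrix (Fin d) (Fin d) (ZMod p)) *ᵥ (0 : V p d) = a.1
      simp
    · show a.2 * 1 = a.2
      exact mul_one _
  inv_mul_cancel a := by
    refine Prod.ext ?_ ?_
    · show -(((a.2)⁻¹ : SL p d) : Matrix (Fin d) (Fin d) (ZMod p)) *ᵥ a.1 +
        (((a.2)⁻¹ : SL p d) : Matrix (Fin d) (Fin d) (ZMod p)) *ᵥ a.1 = (0 : V p d)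
      rw [Matrix.neg_mulVec]
      exact neg_add_cancel _
    · show (a.2)⁻¹ * a.2 = 1
      exact inv_mul_cancel _

instance : DecidableEq (SL p d) :=
  inferInstanceAs (DecidableEq {A : Matrix (Fin d) (Fin d) (ZMod p) // A.det = 1})

instance : DecidableEq (Aff p d) := inferInstanceAs (DecidableEq (V p d × SL p d))

instance [NeZero p] : Fintype (Aff p d) := inferInstanceAs (Fintype (V p d × SL p d))

/-- the action of `Aff p d` on `F_p^d`: `g.x = v(g) + θ(g) x`. -/
def aact (g : Aff p d) (x : V p d) : V p d :=
  g.vec + (g.lin : Matrix (Fin d) (Fin d) (ZMod p)) *ᵥ x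

end Aff

/-- Dirac measure at a point -/
def dirac {β : Type*} [DecidableEq β] (x : β) : β → ℝ := fun y => if y = x then 1 else 0

/-- probability measure (density w.r.t. counting measure) on a finite set -/
def IsProb {β : Type*} [Fintype β] (μ : β → ℝ) : Prop :=
  (∀ x, 0 ≤ μ x) ∧ ∑ x, μ x = 1

/-- convolution of measures on a finite group -/
def conv {H : Type*} [Group H] [Fintype H] (μ ν : H → ℝ) : H → ℝ :=
  fun g => ∑ h, μ h * ν (h⁻¹ * g)

/-- `l`-fold convolution `μ^{*(l)}` -/
def itconv {H : Type*} [Group H] [Fintype H] [DecidableEq H] (μ : H → ℝ) : ℕ → H → ℝ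
  | 0 => dirac 1
  | n + 1 => conv (itconv μ n) μ

/-- `μ̌(g) = μ(g⁻¹)` -/
def check {H : Type*} [Group H] (μ : H → ℝ) : H → ℝ := fun g => μ g⁻¹

/-- the uniform probability measure on a finite subset -/
noncomputable def unif {H : Type*} [DecidableEq H] (S : Finset H) : H → ℝ :=
  fun g => if g ∈ S then ((S.card : ℝ))⁻¹ else 0

/-- `L²` norm (counting measure) of a complex-valued function on a finite set -/
noncomputable def cnorm2 {β : Type*} [Fintype β] (f : β → ℂ) : ℝ :=
  Real.sqrt (∑ x, ‖f x‖ ^ 2)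

/-- the averaging operator `L(μ)` on `ℂ[H]` -/
noncomputable def avgOp {H : Type*} [Group H] [Fintype H] (μ : H → ℝ) (f : H → ℂ) : H → ℂ :=
  fun g => ∑ s, (μ s : ℂ) * f (s⁻¹ * g)

/-- `‖L₀(μ)‖`: the operator norm, w.r.t. the `L²` norm for counting measure, of the
averaging operator `L(μ)` restricted to the functions with zero sum -/
noncomputable def L0norm {H : Type*} [Group H] [Fintype H] (μ : H → ℝ) : ℝ :=
  sSup {r : ℝ | ∃ f : H → ℂ, (∑ g, f g) = 0 ∧ cnorm2 f ≤ 1 ∧ r = cnorm2 (avgOp μ f)}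

/-- `L²` norm (counting measure) of a real-valued function on a finite set -/
noncomputable def norm2V {β : Type*} [Fintype β] (η : β → ℝ) : ℝ :=
  Real.sqrt (∑ x, (η x) ^ 2)

variable {p d : ℕ}

/-- the convolution `μ.ν` of a measure on `Aff p d` with a measure on `F_p^d`:
`(μ.ν)(x) = ∑_g μ(g)·ν(g⁻¹.x)` -/
def actConv [NeZero p] (μ : Aff p d → ℝ) (ν : V p d → ℝ) : V p d → ℝ :=
  fun x => ∑ g : Aff p d, μ g * ν (Aff.aact g⁻¹ x)

/-- pushforward of a measure on `Aff p d` under the projection `θ` to the linear part -/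
def push [NeZero p] (μ : Aff p d → ℝ) : SL p d → ℝ :=
  fun σ => ∑ g : Aff p d, if Aff.lin g = σ then μ g else 0

/-- `‖L₀^θ(μ)‖` -/
noncomputable def L0theta [NeZero p] (μ : Aff p d → ℝ) : ℝ := L0norm (push μ)

/-- the pairing `⟨x,ξ⟩` in `F_p` -/
def ip (x ξ : V p d) : ZMod p := ∑ i, x i * ξ i

/-- `e(t) = e^{-2πit/p}` -/
noncomputable def ee (p : ℕ) (t : ZMod p) : ℂ :=
  Complex.exp (-(2 * Real.pi * Complex.I) * (t.val : ℂ) / (p : ℂ))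

/-- the Fourier transform on `F_p^d` -/
noncomputable def fourier [NeZero p] (f : V p d → ℂ) (ξ : V p d) : ℂ :=
  ∑ x, ee p (ip x ξ) * f x

/-- the normalized `L̂⁴` norm on the Fourier side -/
noncomputable def hatNorm4 [NeZero p] (φ : V p d → ℂ) : ℝ :=
  (((p : ℝ) ^ d)⁻¹ * ∑ ξ, ‖φ ξ‖ ^ 4) ^ ((1 : ℝ) / 4)

open Finset

lemma add_le_sum_add_ite {α : Type*} [Fintype α] [DecidableEq α] {f : α → ℝ} (hf : ∀ i, 0 ≤ f i)
    (i j : α) : f i + f j ≤ ∑ k, f k + if i = j then f i else 0 := by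
  by_cases hij : i = j
  · subst hij
    simpa using single_le_sum (fun k _ => hf k) (mem_univ i)
  · rw [if_neg hij, add_zero, ← sum_pair hij]
    exact sum_le_univ_sum_of_nonneg hf

theorem two_sub_mul_sq_le_sum_conv_sq {G : Type*} [AddCommGroup G] [Fintype G] {a : G → ℝ}
    (ha : ∀ x, 0 ≤ a x) {κ : ℝ} (hκ : ∀ x, a x ^ 2 ≤ κ * ∑ y, a y ^ 2) :
    (2 - κ) * (∑ x, a x ^ 2) ^ 2 ≤ ∑ x, (∑ y, a y * a (x - y)) ^ 2 := by
  classical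
  set S := ∑ x, a x ^ 2
  have hdiag : ∑ y, a y ^ 4 ≤ κ * S ^ 2 :=
    calc ∑ y, a y ^ 4 = ∑ y, a y ^ 2 * a y ^ 2 := sum_congr rfl fun y _ => by ring
      _ ≤ ∑ y, κ * S * a y ^ 2 :=
        sum_le_sum fun y _ => mul_le_mul_of_nonneg_right (hκ y) (sq_nonneg _)
      _ = κ * S ^ 2 := by rw [← mul_sum]; ring
  have hexpand : ∑ x, (∑ y, a y * a (x - y)) ^ 2
      = ∑ y, ∑ y', ∑ z, a y * a y' * (a z * a (y + y' - z)) := by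
    simp only [sq, sum_mul_sum]
    rw [sum_comm]
    refine sum_congr rfl fun y _ => ?_
    rw [← Equiv.sum_comp (Equiv.addLeft y)]
    simp only [Equiv.coe_addLeft, add_sub_cancel_left]
  -- the quadruples `(y, y', z, y + y' - z)` with `z = y` or `z = y'` already carry `2 S² - ∑ a⁴`
  have hpair : ∀ y y', 2 * (a y ^ 2 * a y' ^ 2) ≤
      ∑ z, a y * a y' * (a z * a (y + y' - z)) + if y = y' then a y ^ 4 else 0 := by
    intro y y'
    have := add_le_sum_add_ite (f := fun z => a y * a y' * (a z * a (y + y' - z)))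
      (fun z => mul_nonneg (mul_nonneg (ha y) (ha y')) (mul_nonneg (ha z) (ha _)))
      y y'
    simp only [add_sub_cancel_left, add_sub_cancel_right] at this
    split_ifs at this ⊢ with h
    · subst h; linarith
    · linarith
  have hsum := sum_le_sum fun y (_ : y ∈ univ) => sum_le_sum fun y' (_ : y' ∈ univ) => hpair y y'
  have hS : ∑ y, ∑ y', 2 * (a y ^ 2 * a y' ^ 2) = 2 * S ^ 2 := by
    simp only [← mul_sum, ← sum_mul]; ring
  have hdiag' : ∑ y, ∑ y', (if y = y' then a y ^ 4 else 0) = ∑ y, a y ^ 4 := by simp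
  rw [hS] at hsum
  simp only [sum_add_distrib, hdiag'] at hsum
  rw [hexpand]
  linarith

lemma add_pow_four_le (a b : ℝ) : (a + b) ^ 4 ≤ 8 * (a ^ 4 + b ^ 4) := by
  nlinarith [mul_nonneg (sq_nonneg (a - b)) (sq_nonneg (a + b)),
    mul_nonneg (sq_nonneg (a - b)) (add_nonneg (sq_nonneg a) (sq_nonneg b))]

theorem one_sub_two_mul_sq_mul_le {ι : Type*} (s : Finset ι) (u : ι → ℝ) {c ε : ℝ}
    (hu : ∑ i ∈ s, u i ^ 4 = #s * c ^ 4)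
    (hdev : ∑ i ∈ s, (u i - c) ^ 4 ≤ ε ^ 4 * ∑ i ∈ s, u i ^ 4) :
    (1 - 2 * ε ^ 2) * ∑ i ∈ s, u i ^ 4 ≤ c ^ 2 * ∑ i ∈ s, u i ^ 2 := by
  set M := ∑ i ∈ s, u i ^ 4
  have hM : 0 ≤ M := sum_nonneg fun i _ => by positivity
  have hid : ∑ i ∈ s, (u i ^ 2 - c ^ 2) ^ 2 = 2 * M - 2 * c ^ 2 * ∑ i ∈ s, u i ^ 2 := by
    have h : ∀ i ∈ s, (u i ^ 2 - c ^ 2) ^ 2 = u i ^ 4 - 2 * c ^ 2 * u i ^ 2 + c ^ 4 :=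
      fun i _ => by ring
    rw [sum_congr rfl h, sum_add_distrib, sum_sub_distrib, ← mul_sum, sum_const, nsmul_eq_mul]
    linarith
  have hplus : ∑ i ∈ s, (u i + c) ^ 4 ≤ 16 * M :=
    calc ∑ i ∈ s, (u i + c) ^ 4 ≤ ∑ i ∈ s, 8 * (u i ^ 4 + c ^ 4) :=
          sum_le_sum fun i _ => add_pow_four_le _ _
      _ = 16 * M := by rw [← mul_sum, sum_add_distrib, sum_const, nsmul_eq_mul, ← hu]; ring
  have hCS : (∑ i ∈ s, (u i ^ 2 - c ^ 2) ^ 2) ^ 2 ≤ (4 * ε ^ 2 * M) ^ 2 :=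
    calc (∑ i ∈ s, (u i ^ 2 - c ^ 2) ^ 2) ^ 2
        = (∑ i ∈ s, (u i - c) ^ 2 * (u i + c) ^ 2) ^ 2 := by
          congr 1; exact sum_congr rfl fun i _ => by ring
      _ ≤ (∑ i ∈ s, ((u i - c) ^ 2) ^ 2) * ∑ i ∈ s, ((u i + c) ^ 2) ^ 2 :=
          sum_mul_sq_le_sq_mul_sq _ _ _
      _ ≤ (ε ^ 4 * M) * (16 * M) := by
          simp only [← pow_mul, Nat.reduceMul]
          exact mul_le_mul hdev hplus (sum_nonneg fun i _ => by positivity)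
            (mul_nonneg (by positivity) hM)
      _ = (4 * ε ^ 2 * M) ^ 2 := by ring
  have := le_of_sq_le_sq hCS (mul_nonneg (by positivity) hM)
  linarith

lemma sq_le_mul_sum_sq_of_le_mul_norm2V {β : Type*} [Fintype β] {η : β → ℝ} {k : ℝ} {x : β}
    (hx : 0 ≤ η x) (h : η x ≤ k * norm2V η) : η x ^ 2 ≤ k ^ 2 * ∑ y, η y ^ 2 := by
  calc η x ^ 2 ≤ (k * norm2V η) ^ 2 := pow_le_pow_left₀ hx h 2
    _ = k ^ 2 * ∑ y, η y ^ 2 := by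
      rw [mul_pow, norm2V, Real.sq_sqrt (sum_nonneg fun y _ => sq_nonneg _)]

lemma ip_eq_dotProduct (x ξ : V p d) : ip x ξ = x ⬝ᵥ ξ := rfl

section

variable [NeZero p]

lemma ee_eq_stdAddChar_neg (t : ZMod p) : ee p t = ZMod.stdAddChar (-t) := by
  rw [AddChar.map_neg_eq_inv, ZMod.stdAddChar_apply, ZMod.toCircle_apply, ← Complex.exp_neg, ee]
  congr 1
  ring

noncomputable def pairingChar (x : V p d) : AddChar (V p d) ℂ :=
  ZMod.stdAddChar.compAddMonoidHom
    (AddMonoidHom.mk' (fun ξ => -(x ⬝ᵥ ξ)) fun ξ ζ => by rw [dotProduct_add, neg_add])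

lemma pairingChar_apply (x ξ : V p d) : pairingChar x ξ = ee p (ip x ξ) := by
  simp [pairingChar, ee_eq_stdAddChar_neg, ip_eq_dotProduct]

lemma pairingChar_ne_zero {x : V p d} (hx : x ≠ 0) : pairingChar x ≠ 0 := by
  obtain ⟨i, hi⟩ := Function.ne_iff.1 hx
  rw [AddChar.ne_zero_iff]
  refine ⟨Pi.single i 1, ?_⟩
  rw [pairingChar_apply, ee_eq_stdAddChar_neg,
    ← AddChar.map_zero_eq_one (ZMod.stdAddChar (N := p)), ZMod.injective_stdAddChar.ne_iff]
  simpa [ip_eq_dotProduct] using hi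

lemma sum_ee_ip (x : V p d) : ∑ ξ, ee p (ip x ξ) = if x = 0 then (p : ℂ) ^ d else 0 := by
  simp_rw [← pairingChar_apply]
  split_ifs with hx
  · simp [hx, pairingChar_apply, ip, ee]
  · exact AddChar.sum_eq_zero_iff_ne_zero.2 (pairingChar_ne_zero hx)

lemma ee_ip_add_left (x y ξ : V p d) : ee p (ip (x + y) ξ) = ee p (ip x ξ) * ee p (ip y ξ) := by
  simp only [ee_eq_stdAddChar_neg, ← AddChar.map_add_eq_mul, ip_eq_dotProduct, add_dotProduct,
    neg_add]

lemma ee_ip_mul_conj (x y ξ : V p d) :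
    ee p (ip x ξ) * starRingEnd ℂ (ee p (ip y ξ)) = ee p (ip (x - y) ξ) := by
  simp only [ee_eq_stdAddChar_neg, ← AddChar.map_neg_eq_conj, ← AddChar.map_add_eq_mul,
    ip_eq_dotProduct, sub_dotProduct]
  congr 1
  ring

lemma fourier_zero (f : V p d → ℂ) : fourier f 0 = ∑ x, f x := by
  simp [fourier, ip, ee]

lemma norm_fourier_le (f : V p d → ℂ) (ξ : V p d) : ‖fourier f ξ‖ ≤ ∑ x, ‖f x‖ :=
  (norm_sum_le _ _).trans_eq <| sum_congr rfl fun x _ => by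
    rw [norm_mul, ee_eq_stdAddChar_neg, AddChar.norm_apply, one_mul]

theorem sum_norm_fourier_sq (f : V p d → ℂ) :
    ∑ ξ, ‖fourier f ξ‖ ^ 2 = (p : ℝ) ^ d * ∑ x, ‖f x‖ ^ 2 := by
  apply Complex.ofReal_injective
  push_cast
  simp_rw [← Complex.mul_conj']
  calc ∑ ξ, fourier f ξ * starRingEnd ℂ (fourier f ξ)
      = ∑ x, ∑ y, f x * starRingEnd ℂ (f y) * ∑ ξ, ee p (ip (x - y) ξ) := by
        simp_rw [fourier, map_sum, sum_mul_sum, mul_sum, ← ee_ip_mul_conj, map_mul]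
        rw [sum_comm]
        refine sum_congr rfl fun x _ => ?_
        rw [sum_comm]
        refine sum_congr rfl fun y _ => sum_congr rfl fun ξ _ => by ring
    _ = (p : ℂ) ^ d * ∑ x, f x * starRingEnd ℂ (f x) := by
        simp [sum_ee_ip, sub_eq_zero, mul_sum, mul_comm]

theorem fourier_conv (f g : V p d → ℂ) (ξ : V p d) :
    fourier (fun x => ∑ y, f y * g (x - y)) ξ = fourier f ξ * fourier g ξ := by
  simp only [fourier]
  rw [sum_mul_sum]
  simp only [mul_sum]
  rw [sum_comm]
  refine sum_congr rfl fun y _ => ?_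
  rw [← Equiv.sum_comp (Equiv.addLeft y)]
  refine sum_congr rfl fun z _ => ?_
  rw [Equiv.coe_addLeft, ee_ip_add_left, add_sub_cancel_left]
  ring

lemma pow_dim_pos : (0 : ℝ) < (p : ℝ) ^ d := pow_pos (Nat.cast_pos.2 (NeZero.pos p)) d

lemma hatNorm4_pow_four (φ : V p d → ℂ) :
    hatNorm4 φ ^ 4 = ((p : ℝ) ^ d)⁻¹ * ∑ ξ, ‖φ ξ‖ ^ 4 := by
  rw [hatNorm4, one_div, ← Real.rpow_natCast, ← Real.rpow_mul (by positivity)]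
  norm_num

lemma hatNorm4_nonneg (φ : V p d → ℂ) : 0 ≤ hatNorm4 φ :=
  Real.rpow_nonneg (by positivity) _

lemma mul_hatNorm4_ite_pow_four (φ : V p d → ℂ) :
    (p : ℝ) ^ d * hatNorm4 (fun ξ => if ξ = 0 then 0 else φ ξ) ^ 4 =
      ∑ ξ ∈ univ.erase 0, ‖φ ξ‖ ^ 4 := by
  rw [hatNorm4_pow_four, ← mul_assoc, mul_inv_cancel₀ pow_dim_pos.ne', one_mul,
    ← add_sum_erase _ _ (mem_univ 0)]
  simp only [if_true, norm_zero, zero_pow four_ne_zero, zero_add]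
  exact sum_congr rfl fun ξ hξ => by rw [if_neg (ne_of_mem_erase hξ)]

lemma le_mul_hatNorm4_pow_four {φ : V p d → ℂ} (h : 4 * (p : ℝ) ^ (-(d : ℝ) / 4) ≤ hatNorm4 φ) :
    256 ≤ (p : ℝ) ^ d * hatNorm4 φ ^ 4 := by
  have hp : (0 : ℝ) ≤ p := Nat.cast_nonneg p
  have h4 := pow_le_pow_left₀ (by positivity) h 4
  rw [mul_pow, ← Real.rpow_mul_natCast hp, show -(d : ℝ) / 4 * (4 : ℕ) = -d by push_cast; ring,
    Real.rpow_neg hp, Real.rpow_natCast, ← div_eq_mul_inv, div_le_iff₀ pow_dim_pos] at h4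
  linarith

lemma card_erase_zero : (#(univ.erase (0 : V p d)) : ℝ) = (p : ℝ) ^ d - 1 := by
  simp [card_erase_of_mem, Nat.cast_sub (Nat.one_le_pow _ _ (NeZero.pos p))]

theorem one_sub_two_mul_sq_hatNorm4_mul_le (φ : V p d → ℂ) {c : ℝ}
    (hc : ((p : ℝ) ^ d - 1) * c ^ 4 = (p : ℝ) ^ d)
    (hφ : hatNorm4 (fun ξ => if ξ = 0 then 0 else φ ξ) ≠ 0) :
    (1 - 2 * hatNorm4 (fun ξ => if ξ = 0 then (0 : ℂ) else
        ((‖φ ξ‖ / hatNorm4 (fun ζ => if ζ = 0 then 0 else φ ζ) - c : ℝ) : ℂ)) ^ 2) * (p : ℝ) ^ d ≤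
      c ^ 2 * ∑ ξ ∈ univ.erase 0, (‖φ ξ‖ / hatNorm4 (fun ζ => if ζ = 0 then 0 else φ ζ)) ^ 2 := by
  set T := hatNorm4 (fun ζ => if ζ = 0 then 0 else φ ζ)
  set ε := hatNorm4 (fun ξ => if ξ = 0 then (0 : ℂ) else ((‖φ ξ‖ / T - c : ℝ) : ℂ))
  have hT4 : (p : ℝ) ^ d * T ^ 4 = ∑ ξ ∈ univ.erase 0, ‖φ ξ‖ ^ 4 := mul_hatNorm4_ite_pow_four φ
  have hu4 : ∑ ξ ∈ univ.erase 0, (‖φ ξ‖ / T) ^ 4 = (p : ℝ) ^ d := by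
    simp only [div_pow, ← sum_div, ← hT4]
    field_simp
  have hε4 : (p : ℝ) ^ d * ε ^ 4 = ∑ ξ ∈ univ.erase 0, (‖φ ξ‖ / T - c) ^ 4 := by
    rw [mul_hatNorm4_ite_pow_four]
    exact sum_congr rfl fun ξ _ => by
      rw [Complex.norm_real, Real.norm_eq_abs, Even.pow_abs ⟨2, rfl⟩]
  have h := one_sub_two_mul_sq_mul_le (univ.erase 0) (fun ξ => ‖φ ξ‖ / T) (c := c) (ε := ε)
    (by rw [hu4, card_erase_zero, hc]) (by rw [hu4, ← hε4, mul_comm])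
  rwa [hu4] at h

variable {η : V p d → ℝ}

theorem two_sub_mul_sq_sum_norm_fourier_sq_le (hη : ∀ x, 0 ≤ η x) {κ : ℝ}
    (hκ : ∀ x, η x ^ 2 ≤ κ * ∑ y, η y ^ 2) :
    (2 - κ) * (∑ ξ, ‖fourier (fun x => (η x : ℂ)) ξ‖ ^ 2) ^ 2 ≤
      (p : ℝ) ^ d * ∑ ξ, ‖fourier (fun x => (η x : ℂ)) ξ‖ ^ 4 := by
  have hfour : ∑ ξ, ‖fourier (fun x => (η x : ℂ)) ξ‖ ^ 4 =
      (p : ℝ) ^ d * ∑ x, (∑ y, η y * η (x - y)) ^ 2 := by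
    have h := sum_norm_fourier_sq (fun x => ∑ y, (η y : ℂ) * η (x - y))
    simp only [fourier_conv (fun x => (η x : ℂ)) (fun x => (η x : ℂ)), norm_mul] at h
    simp only [← Complex.ofReal_mul, ← Complex.ofReal_sum, Complex.norm_real, Real.norm_eq_abs,
      sq_abs] at h
    rw [← h]
    exact sum_congr rfl fun ξ _ => by ring
  rw [sum_norm_fourier_sq, hfour]
  simp only [Complex.norm_real, Real.norm_eq_abs, sq_abs]
  calc (2 - κ) * ((p : ℝ) ^ d * ∑ x, η x ^ 2) ^ 2
      = (p : ℝ) ^ d * ((p : ℝ) ^ d * ((2 - κ) * (∑ x, η x ^ 2) ^ 2)) := by ring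
    _ ≤ _ := by gcongr; exact two_sub_mul_sq_le_sum_conv_sq hη hκ

namespace IsProb

lemma norm_fourier_le_one (hη : IsProb η) (ξ : V p d) :
    ‖fourier (fun x => (η x : ℂ)) ξ‖ ≤ 1 := by
  refine (norm_fourier_le _ ξ).trans_eq ?_
  simp only [Complex.norm_real, Real.norm_eq_abs, abs_of_nonneg (hη.1 _), hη.2]

lemma sum_norm_fourier_pow (hη : IsProb η) (k : ℕ) :
    ∑ ξ, ‖fourier (fun x => (η x : ℂ)) ξ‖ ^ k =
      1 + ∑ ξ ∈ univ.erase 0, ‖fourier (fun x => (η x : ℂ)) ξ‖ ^ k := by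
  rw [← add_sum_erase _ _ (mem_univ 0), fourier_zero, ← Complex.ofReal_sum, hη.2,
    Complex.ofReal_one, norm_one, one_pow]

lemma sum_erase_norm_fourier_pow_le (hη : IsProb η) (k : ℕ) :
    ∑ ξ ∈ univ.erase 0, ‖fourier (fun x => (η x : ℂ)) ξ‖ ^ k ≤ (p : ℝ) ^ d - 1 := by
  rw [← card_erase_zero, card_eq_sum_ones, Nat.cast_sum, Nat.cast_one]
  exact sum_le_sum fun ξ _ => pow_le_one₀ (norm_nonneg _) (hη.norm_fourier_le_one ξ)

theorem two_sub_sq_mul_sq_sum_div_le (hη : IsProb η) {k : ℝ} (hk : ∀ x, η x ≤ k * norm2V η)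
    (hk2 : k ^ 2 ≤ 2) {T : ℝ}
    (hT : (p : ℝ) ^ d * T ^ 4 = ∑ ξ ∈ univ.erase 0, ‖fourier (fun x => (η x : ℂ)) ξ‖ ^ 4)
    (h256 : 256 ≤ (p : ℝ) ^ d * T ^ 4) :
    (2 - k ^ 2) * (∑ ξ ∈ univ.erase 0, (‖fourier (fun x => (η x : ℂ)) ξ‖ / T) ^ 2) ^ 2 ≤
      (257 / 256) * ((p : ℝ) ^ d) ^ 2 := by
  set N : ℝ := (p : ℝ) ^ d
  set m := ∑ ξ ∈ univ.erase 0, (‖fourier (fun x => (η x : ℂ)) ξ‖ / T) ^ 2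
  have hT4 : 0 < T ^ 4 := pos_of_mul_pos_right (by linarith) pow_dim_pos.le
  have hm : ∑ ξ ∈ univ.erase 0, ‖fourier (fun x => (η x : ℂ)) ξ‖ ^ 2 = m * T ^ 2 := by
    have hT0 : T ≠ 0 := fun h => by simp [h] at hT4
    simp only [m, div_pow, ← sum_div]
    field_simp
  have henergy := two_sub_mul_sq_sum_norm_fourier_sq_le hη.1
    fun x => sq_le_mul_sum_sq_of_le_mul_norm2V (hη.1 x) (hk x)
  rw [hη.sum_norm_fourier_pow, hη.sum_norm_fourier_pow, hm, ← hT] at henergy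
  have hmT : 0 ≤ m * T ^ 2 := by rw [← hm]; positivity
  refine le_of_mul_le_mul_right ?_ hT4
  calc (2 - k ^ 2) * m ^ 2 * T ^ 4 = (2 - k ^ 2) * (m * T ^ 2) ^ 2 := by ring
    _ ≤ (2 - k ^ 2) * (1 + m * T ^ 2) ^ 2 := by gcongr; linarith
    _ ≤ N * (1 + N * T ^ 4) := henergy
    _ ≤ (257 / 256) * N ^ 2 * T ^ 4 := by nlinarith

end IsProb

end

theorem statement7_general (p d : ℕ) [Fact p.Prime]
    (η : V p d → ℝ) (hη : IsProb η)
    (hatom : ∀ x : V p d, η x ≤ (40 / 41) * norm2V η)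
    (hψ : 4 * (p : ℝ) ^ (-(d : ℝ) / 4) ≤
      hatNorm4 (fun ξ : V p d => if ξ = 0 then 0 else fourier (fun x => (η x : ℂ)) ξ)) :
    1 / 16 ≤ hatNorm4 (fun ξ : V p d => if ξ = 0 then (0 : ℂ) else
      (((‖fourier (fun x => (η x : ℂ)) ξ‖ /
            hatNorm4 (fun ζ : V p d => if ζ = 0 then 0 else fourier (fun x => (η x : ℂ)) ζ) -
          ((p : ℝ) ^ d / ((p : ℝ) ^ d - 1)) ^ ((1 : ℝ) / 4) : ℝ)) : ℂ)) := by
  have : NeZero p := ⟨(Fact.out : p.Prime).ne_zero⟩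
  set N : ℝ := (p : ℝ) ^ d
  set F := fourier (fun x => (η x : ℂ))
  set T := hatNorm4 (fun ζ : V p d => if ζ = 0 then 0 else F ζ)
  set c := (N / (N - 1)) ^ ((1 : ℝ) / 4)
  set ε := hatNorm4 (fun ξ : V p d => if ξ = 0 then (0 : ℂ) else ((‖F ξ‖ / T - c : ℝ) : ℂ))
  set m := ∑ ξ ∈ univ.erase 0, (‖F ξ‖ / T) ^ 2
  have h256 : 256 ≤ N * T ^ 4 := le_mul_hatNorm4_pow_four hψ
  have hT4 : N * T ^ 4 = ∑ ξ ∈ univ.erase 0, ‖F ξ‖ ^ 4 := mul_hatNorm4_ite_pow_four F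
  have hN : 256 ≤ N - 1 := h256.trans (hT4 ▸ hη.sum_erase_norm_fourier_pow_le 4)
  have hc4 : c ^ 4 = N / (N - 1) := by
    rw [← Real.rpow_natCast, ← Real.rpow_mul (div_nonneg pow_dim_pos.le (by linarith)),
      Nat.cast_ofNat, one_div, inv_mul_cancel₀ four_ne_zero, Real.rpow_one]
  have hupper : (2 - (40 / 41) ^ 2) * m ^ 2 ≤ (257 / 256) * N ^ 2 :=
    hη.two_sub_sq_mul_sq_sum_div_le hatom (by norm_num) hT4 h256
  have hT : T ≠ 0 := fun h => by norm_num [h] at h256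
  have hlower : (1 - 2 * ε ^ 2) * N ≤ c ^ 2 * m :=
    one_sub_two_mul_sq_hatNorm4_mul_le F (by rw [hc4]; field_simp; linarith) hT
  by_contra! hlt
  have hε2 : ε ^ 2 ≤ (1 / 16) ^ 2 := pow_le_pow_left₀ (hatNorm4_nonneg _) hlt.le 2
  have h1 : (127 / 128) * N ≤ c ^ 2 * m := by nlinarith
  have h2 : ((127 / 128) * N) ^ 2 ≤ c ^ 4 * m ^ 2 :=
    (pow_le_pow_left₀ (by positivity) h1 2).trans_eq (by ring)
  have hc4' : c ^ 4 ≤ 256 / 255 := by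
    rw [hc4, div_le_iff₀ (by linarith)]; linarith
  -- `(127/128)² ≈ 0.984` exceeds `(256/255) (257/256) / (2 - (40/41)²) ≈ 0.962`
  nlinarith [sq_nonneg m]

/-- (Proposition `nonconstant`.) If `η` is a probability measure on `F_p^d`
with `η(x) ≤ (40/41)‖η‖_{L²}` for every `x` and `‖ψ‖_{L̂⁴} ≥ 4 p^{−d/4}`, where `ψ` is the
restriction of `η̂` to `X = F_p^d ∖ {0}`, then
`‖ |ψ|/‖ψ‖_{L̂⁴} − (p^d/(p^d−1))^{1/4} ‖_{L̂⁴} ≥ 1/16` (the function on the left being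
extended by `0` at `0`). -/
theorem statement7 (p d : ℕ) [Fact p.Prime] (hd : 0 < d)
    (η : V p d → ℝ) (hη : IsProb η)
    (hatom : ∀ x : V p d, η x ≤ (40 / 41) * norm2V η)
    (hψ : 4 * (p : ℝ) ^ (-(d : ℝ) / 4) ≤
      hatNorm4 (fun ξ : V p d => if ξ = 0 then 0 else fourier (fun x => (η x : ℂ)) ξ)) :
    1 / 16 ≤ hatNorm4 (fun ξ : V p d => if ξ = 0 then (0 : ℂ) else
      (((‖fourier (fun x => (η x : ℂ)) ξ‖ /
            hatNorm4 (fun ζ : V p d => if ζ = 0 then 0 else fourier (fun x => (η x : ℂ)) ζ) -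
          ((p : ℝ) ^ d / ((p : ℝ) ^ d - 1)) ^ ((1 : ℝ) / 4) : ℝ)) : ℂ)) :=
  statement7_general p d η hη hatom hψ

end Paper
end

section
/- Let η be a probability measure on F_p^d such that η(x) ≤ (40/41)·‖η‖_{L²} for every x ∈ F_p^d. Then Σ over x ∈ F_p^d with x ≠ 0 of (η∗η̌)(x)² is at least (1/50)·‖η∗η̌‖_{L²}², where η̌(x) = η(−x) and ∗ denotes convolution on the additive group F_p^d. -/
open scoped BigOperators Matrix

namespace Paper

variable {p d : ℕ}

/-! Write `ν = η ∗ η̌` and `S = ‖η‖₂²`, so that `ν(0) = S`. Expanding `‖ν‖₂² = Σ_{y,z} η(y) η(z) ν(y - z)`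
and bounding `ν(y - z) ≥ η(y) η(z)` off the diagonal gives `‖ν‖₂² ≥ 2S² - Σ η⁴`, while the atom bound
gives `Σ η⁴ ≤ (40/41)² S²`. Hence `ν(0)² = S²` is at most `49/50` of `‖ν‖₂²`. -/

section Autocorrelation

variable {G : Type*} [AddCommGroup G] [Fintype G]

/-- `η ∗ η̌` -/
def autocorr (η : G → ℝ) (x : G) : ℝ := ∑ y, η y * η (-(x - y))

lemma autocorr_zero (η : G → ℝ) : autocorr η 0 = ∑ y, η y ^ 2 := by
  simp only [autocorr, zero_sub, neg_neg, sq]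

lemma mul_le_autocorr_sub {η : G → ℝ} (hη : ∀ x, 0 ≤ η x) (y z : G) :
    η y * η z ≤ autocorr η (y - z) := by
  calc η y * η z = η y * η (-(y - z - y)) := by rw [sub_sub_cancel_left, neg_neg]
    _ ≤ autocorr η (y - z) :=
      Finset.single_le_sum (f := fun w => η w * η (-(y - z - w)))
        (fun w _ => mul_nonneg (hη w) (hη _)) (Finset.mem_univ y)

lemma mul_add_ite_le_autocorr_sub [DecidableEq G] {η : G → ℝ} (hη : ∀ x, 0 ≤ η x) (y z : G) :
    η y * η z + (if y = z then ∑ w, η w ^ 2 - η y ^ 2 else 0) ≤ autocorr η (y - z) := by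
  split_ifs with h
  · rw [h, sub_self, autocorr_zero]
    linarith
  · simpa using mul_le_autocorr_sub hη y z

lemma sum_autocorr_sq (η : G → ℝ) :
    ∑ x, autocorr η x ^ 2 = ∑ y, ∑ z, η y * η z * autocorr η (y - z) := by
  calc ∑ x, autocorr η x ^ 2 = ∑ y, ∑ x, η y * η (-(x - y)) * autocorr η x := by
        simp only [sq, autocorr, Finset.sum_mul]
        exact Finset.sum_comm
    _ = ∑ y, ∑ z, η y * η z * autocorr η (y - z) := by
        refine Finset.sum_congr rfl fun y _ => ?_
        exact Fintype.sum_equiv (Equiv.subLeft y) _ _ fun x => by simp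

lemma two_mul_sq_sub_sum_pow_four_le_sum_autocorr_sq {η : G → ℝ} (hη : ∀ x, 0 ≤ η x) :
    2 * (∑ y, η y ^ 2) ^ 2 - ∑ y, η y ^ 4 ≤ ∑ x, autocorr η x ^ 2 := by
  classical
  set S := ∑ y, η y ^ 2
  calc 2 * S ^ 2 - ∑ y, η y ^ 4
      = ∑ y, ∑ z, η y * η z * (η y * η z + if y = z then S - η y ^ 2 else 0) := by
        simp only [mul_add, mul_ite, mul_zero, Finset.sum_add_distrib, Finset.sum_ite_eq,
          Finset.mem_univ, if_true]
        have hoff : ∑ y, ∑ z, η y * η z * (η y * η z) = S ^ 2 := by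
          rw [sq, Finset.sum_mul_sum]
          exact Finset.sum_congr rfl fun y _ => Finset.sum_congr rfl fun z _ => by ring
        have hdiag : ∑ y, η y * η y * (S - η y ^ 2) = S ^ 2 - ∑ y, η y ^ 4 := by
          rw [Finset.sum_congr rfl fun y _ => (by ring : η y * η y * (S - η y ^ 2) =
            η y ^ 2 * S - η y ^ 4), Finset.sum_sub_distrib, ← Finset.sum_mul, sq S]
        rw [hoff, hdiag]
        ring
    _ ≤ ∑ y, ∑ z, η y * η z * autocorr η (y - z) := by
        gcongr with y _ z _
        · exact mul_nonneg (hη y) (hη z)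
        · exact mul_add_ite_le_autocorr_sub hη y z
    _ = ∑ x, autocorr η x ^ 2 := (sum_autocorr_sq η).symm

lemma sum_ne_zero_autocorr_sq [DecidableEq G] (η : G → ℝ) :
    ∑ x ∈ Finset.univ.filter (fun x : G => x ≠ 0), autocorr η x ^ 2 =
      ∑ x, autocorr η x ^ 2 - (∑ y, η y ^ 2) ^ 2 := by
  rw [Finset.filter_ne', ← autocorr_zero η, eq_sub_iff_add_eq]
  exact Finset.sum_erase_add _ _ (Finset.mem_univ 0)

end Autocorrelation

lemma sum_pow_four_le_of_sq_le {β : Type*} [Fintype β] {η : β → ℝ} {M : ℝ}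
    (h : ∀ x, η x ^ 2 ≤ M) : ∑ x, η x ^ 4 ≤ M * ∑ x, η x ^ 2 := by
  rw [Finset.mul_sum]
  gcongr with x
  rw [show η x ^ 4 = η x ^ 2 * η x ^ 2 by ring]
  exact mul_le_mul_of_nonneg_right (h x) (sq_nonneg _)

lemma sq_le_of_le_mul_norm2V {β : Type*} [Fintype β] {η : β → ℝ} {c : ℝ}
    (hη : ∀ x, 0 ≤ η x) (h : ∀ x, η x ≤ c * norm2V η) (x : β) :
    η x ^ 2 ≤ c ^ 2 * ∑ y, η y ^ 2 := by
  calc η x ^ 2 ≤ (c * norm2V η) ^ 2 := pow_le_pow_left₀ (hη x) (h x) 2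
    _ = c ^ 2 * ∑ y, η y ^ 2 := by
        rw [mul_pow, norm2V, Real.sq_sqrt (Finset.sum_nonneg fun y _ => sq_nonneg _)]

theorem statement8_general (p d : ℕ) [Fact p.Prime]
    (η : V p d → ℝ) (hη : IsProb η)
    (hatom : ∀ x : V p d, η x ≤ (40 / 41) * norm2V η) :
    (1 / 50) * norm2V (fun x : V p d => ∑ y : V p d, η y * η (-(x - y))) ^ 2 ≤
      ∑ x ∈ Finset.univ.filter (fun x : V p d => x ≠ 0),
        (∑ y : V p d, η y * η (-(x - y))) ^ 2 := by
  obtain ⟨hpos, -⟩ := hη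
  change (1 / 50) * norm2V (autocorr η) ^ 2 ≤
    ∑ x ∈ Finset.univ.filter (fun x : V p d => x ≠ 0), autocorr η x ^ 2
  have henergy := two_mul_sq_sub_sum_pow_four_le_sum_autocorr_sq hpos
  have hfourth := sum_pow_four_le_of_sq_le (sq_le_of_le_mul_norm2V hpos hatom)
  rw [sum_ne_zero_autocorr_sq, norm2V, Real.sq_sqrt (Finset.sum_nonneg fun x _ => sq_nonneg _)]
  linarith [sq_nonneg (∑ y, η y ^ 2)]

/-- (Lemma `no-mass-origin`.) If `η` is a probability measure on `F_p^d` such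
that `η(x) ≤ (40/41)‖η‖_{L²}` for every `x`, then
`Σ_{x ≠ 0} (η∗η̌)(x)² ≥ (1/50)‖η∗η̌‖_{L²}²`, where `η̌(x) = η(−x)`. -/
theorem statement8 (p d : ℕ) [Fact p.Prime] (hd : 0 < d)
    (η : V p d → ℝ) (hη : IsProb η)
    (hatom : ∀ x : V p d, η x ≤ (40 / 41) * norm2V η) :
    (1 / 50) * norm2V (fun x : V p d => ∑ y : V p d, η y * η (-(x - y))) ^ 2 ≤
      ∑ x ∈ Finset.univ.filter (fun x : V p d => x ≠ 0),
        (∑ y : V p d, η y * η (-(x - y))) ^ 2 :=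
  statement8_general p d η hη hatom

end Paper
end

section
/- Let μ be a probability measure on G = F_p^d ⋊ SL_d(F_p), set α = max over x, y ∈ F_p^d of (μ.δ_x)(y), and assume α < 1 and ‖L₀^θ(μ)‖ < 1. Let l₀ be an integer with l₀ ≥ max{3/(1−α), (log 2)/(2 − 2‖L₀^θ(μ)‖)}, and set μ₀ = (μ̌∗μ)^{*(l₀)}. Then ‖L₀^θ(μ₀)‖ ≤ 1/2, and ‖μ₀.δ_x‖_{L²} ≤ 3/4 for every x ∈ F_p^d. -/
open scoped BigOperators Matrix

namespace Paper

variable {p d : ℕ}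

/-!
Both bounds come from iterating a one-step contraction.

Pushing forward along `θ` turns convolution into convolution and `μ̌` into `(θ_*μ)ˇ`, the norm
`‖L₀(·)‖` is submultiplicative, and `L₀(μ̌)` is the adjoint of `L₀(μ)`; hence
`‖L₀^θ(μ₀)‖ ≤ ‖L₀^θ(μ)‖^{2l₀} ≤ exp(-2l₀(1 - ‖L₀^θ(μ)‖)) ≤ 1/2`.

Put `ν = μ̌∗μ`. Since `ν.δ_z = μ̌.(μ.δ_z) ≤ α` pointwise, `ν` sends mass at most `α` to any
single point. If a probability measure `η` on `F_p^d` has maximal mass `1/2 + m` at `x₀`, every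
other point carries at most `1/2 - m`, so `ν.η ≤ 1/2 + c m` everywhere, with `c = max(2α - 1, 0)`.
Iterating from `δ_x`, the maximal mass of `μ₀.δ_x` is at most `1/2 + c^{l₀}/2 ≤ 9/16`, and
`‖η‖₂² ≤ max η` for a probability measure.
-/

open Finset

section Convolution

variable {H : Type*} [Group H] [Fintype H]

lemma sum_comp_mul_left {M : Type*} [AddCommMonoid M] (F : H → M) (h : H) :
    ∑ g, F (h * g) = ∑ g, F g :=
  Fintype.sum_equiv (Equiv.mulLeft h) _ _ fun _ => rfl

lemma sum_comp_inv {M : Type*} [AddCommMonoid M] (F : H → M) : ∑ g, F g⁻¹ = ∑ g, F g :=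
  Fintype.sum_equiv (Equiv.inv H) _ _ fun _ => rfl

lemma conv_dirac_one_left [DecidableEq H] (μ : H → ℝ) : conv (dirac 1) μ = μ := by
  funext g
  simp [conv, dirac]

lemma conv_dirac_one_right [DecidableEq H] (μ : H → ℝ) : conv μ (dirac 1) = μ := by
  funext g
  simp [conv, dirac, inv_mul_eq_one]

lemma conv_assoc (a b c : H → ℝ) : conv (conv a b) c = conv a (conv b c) := by
  funext g
  simp only [conv, sum_mul, mul_sum]
  rw [sum_comm]
  refine sum_congr rfl fun u _ => ?_
  rw [← sum_comp_mul_left _ u]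
  simp [mul_assoc]

lemma itconv_succ_left [DecidableEq H] (σ : H → ℝ) (n : ℕ) :
    itconv σ (n + 1) = conv σ (itconv σ n) := by
  induction n with
  | zero => simp [itconv, conv_dirac_one_left, conv_dirac_one_right]
  | succ n ih =>
    show conv (itconv σ (n + 1)) σ = conv σ (conv (itconv σ n) σ)
    rw [ih, conv_assoc]

lemma sum_conv (μ ν : H → ℝ) : ∑ g, conv μ ν g = (∑ g, μ g) * ∑ g, ν g := by
  simp only [conv]
  rw [sum_comm, sum_mul]
  refine sum_congr rfl fun h _ => ?_
  rw [← mul_sum, sum_comp_mul_left ν h⁻¹]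

lemma isProb_dirac {β : Type*} [Fintype β] [DecidableEq β] (x : β) : IsProb (dirac x) :=
  ⟨fun y => by unfold dirac; split <;> norm_num, by simp [dirac]⟩

lemma IsProb.conv {μ ν : H → ℝ} (hμ : IsProb μ) (hν : IsProb ν) : IsProb (conv μ ν) :=
  ⟨fun _ => sum_nonneg fun _ _ => mul_nonneg (hμ.1 _) (hν.1 _), by
    rw [sum_conv, hμ.2, hν.2, one_mul]⟩

lemma IsProb.check {μ : H → ℝ} (hμ : IsProb μ) : IsProb (check μ) :=
  ⟨fun _ => hμ.1 _, by rw [← hμ.2]; exact sum_comp_inv μ⟩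

lemma IsProb.itconv [DecidableEq H] {σ : H → ℝ} (hσ : IsProb σ) (n : ℕ) :
    IsProb (itconv σ n) := by
  induction n with
  | zero => exact isProb_dirac 1
  | succ n ih => exact ih.conv hσ

end Convolution

section L2Norm

variable {β : Type*} [Fintype β]

noncomputable def toEuclidean (β : Type*) [Fintype β] : (β → ℂ) ≃ₗ[ℂ] EuclideanSpace ℂ β :=
  (WithLp.linearEquiv 2 ℂ (β → ℂ)).symm

lemma cnorm2_eq_norm (f : β → ℂ) : cnorm2 f = ‖toEuclidean β f‖ := by
  rw [EuclideanSpace.norm_eq]; rfl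

lemma cnorm2_nonneg (f : β → ℂ) : 0 ≤ cnorm2 f := Real.sqrt_nonneg _

lemma cnorm2_eq_zero {f : β → ℂ} : cnorm2 f = 0 ↔ f = 0 := by
  rw [cnorm2_eq_norm, norm_eq_zero, LinearEquiv.map_eq_zero_iff]

lemma cnorm2_smul (c : ℂ) (f : β → ℂ) : cnorm2 (c • f) = ‖c‖ * cnorm2 f := by
  rw [cnorm2_eq_norm, cnorm2_eq_norm, map_smul, norm_smul]

lemma cnorm2_sum_le {ι : Type*} (s : Finset ι) (f : ι → β → ℂ) :
    cnorm2 (∑ i ∈ s, f i) ≤ ∑ i ∈ s, cnorm2 (f i) := by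
  simp only [cnorm2_eq_norm, map_sum]
  exact norm_sum_le _ _

lemma cnorm2_comp_equiv (f : β → ℂ) (e : β ≃ β) : cnorm2 (f ∘ e) = cnorm2 f := by
  simp only [cnorm2, Function.comp_apply]
  rw [e.sum_comp (fun x => ‖f x‖ ^ 2)]

lemma sq_cnorm2 (f : β → ℂ) : cnorm2 f ^ 2 = ∑ x, ‖f x‖ ^ 2 :=
  Real.sq_sqrt (sum_nonneg fun _ _ => sq_nonneg _)

lemma norm_sum_conj_mul_le (u v : β → ℂ) :
    ‖∑ x, starRingEnd ℂ (u x) * v x‖ ≤ cnorm2 u * cnorm2 v := by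
  have h := norm_inner_le_norm (𝕜 := ℂ) (toEuclidean β u) (toEuclidean β v)
  rw [← cnorm2_eq_norm, ← cnorm2_eq_norm] at h
  simpa [PiLp.inner_apply, mul_comm, toEuclidean] using h

end L2Norm

section SpectralGap

variable {H : Type*} [Group H] [Fintype H]

lemma avgOp_smul (σ : H → ℝ) (c : ℂ) (f : H → ℂ) : avgOp σ (c • f) = c • avgOp σ f := by
  funext g
  simp only [avgOp, Pi.smul_apply, smul_eq_mul, mul_sum]
  exact sum_congr rfl fun _ _ => mul_left_comm _ _ _

lemma sum_avgOp (σ : H → ℝ) (f : H → ℂ) :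
    ∑ g, avgOp σ f g = (∑ s, (σ s : ℂ)) * ∑ g, f g := by
  simp only [avgOp]
  rw [sum_comm, sum_mul]
  refine sum_congr rfl fun s _ => ?_
  rw [← mul_sum, sum_comp_mul_left f s⁻¹]

lemma avgOp_conv (σ τ : H → ℝ) (f : H → ℂ) :
    avgOp (conv σ τ) f = avgOp σ (avgOp τ f) := by
  funext g
  simp only [avgOp, conv, Complex.ofReal_sum, Complex.ofReal_mul, sum_mul, mul_sum]
  rw [sum_comm]
  refine sum_congr rfl fun h _ => ?_
  rw [← sum_comp_mul_left _ h]
  simp [mul_assoc]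

lemma cnorm2_avgOp_le (σ : H → ℝ) (f : H → ℂ) :
    cnorm2 (avgOp σ f) ≤ (∑ s, |σ s|) * cnorm2 f := by
  have hsum : avgOp σ f = ∑ s, (σ s : ℂ) • (f ∘ Equiv.mulLeft s⁻¹) := by
    funext g
    simp [avgOp, Finset.sum_apply]
  calc cnorm2 (avgOp σ f) ≤ ∑ s, cnorm2 ((σ s : ℂ) • (f ∘ Equiv.mulLeft s⁻¹)) :=
        hsum ▸ cnorm2_sum_le _ _
    _ = (∑ s, |σ s|) * cnorm2 f := by
        simp only [cnorm2_smul, cnorm2_comp_equiv, Complex.norm_real, Real.norm_eq_abs, sum_mul]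

lemma bddAbove_L0norm_set (σ : H → ℝ) :
    BddAbove {r : ℝ | ∃ f : H → ℂ, (∑ g, f g) = 0 ∧ cnorm2 f ≤ 1 ∧ r = cnorm2 (avgOp σ f)} := by
  refine ⟨∑ s, |σ s|, ?_⟩
  rintro _ ⟨f, -, hf, rfl⟩
  exact (cnorm2_avgOp_le σ f).trans
    (mul_le_of_le_one_right (sum_nonneg fun _ _ => abs_nonneg _) hf)

lemma L0norm_nonneg (σ : H → ℝ) : 0 ≤ L0norm σ :=
  le_csSup (bddAbove_L0norm_set σ) ⟨0, by simp, by simp [cnorm2], by simp [avgOp, cnorm2]⟩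

lemma L0norm_le {σ : H → ℝ} {B : ℝ} (hB : 0 ≤ B)
    (h : ∀ f : H → ℂ, ∑ g, f g = 0 → cnorm2 f ≤ 1 → cnorm2 (avgOp σ f) ≤ B) :
    L0norm σ ≤ B := by
  refine Real.sSup_le ?_ hB
  rintro _ ⟨f, hf0, hf1, rfl⟩
  exact h f hf0 hf1

lemma cnorm2_avgOp_le_L0norm (σ : H → ℝ) {f : H → ℂ} (hf : ∑ g, f g = 0) :
    cnorm2 (avgOp σ f) ≤ L0norm σ * cnorm2 f := by
  rcases (cnorm2_nonneg f).eq_or_lt with h0 | hpos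
  · rw [(cnorm2_eq_zero.mp h0.symm)]
    simp [avgOp, cnorm2]
  set c : ℂ := (((cnorm2 f)⁻¹ : ℝ) : ℂ)
  have hc : ‖c‖ = (cnorm2 f)⁻¹ := by simp [c, hpos.le]
  have hmem : cnorm2 (avgOp σ (c • f)) ≤ L0norm σ := by
    refine le_csSup (bddAbove_L0norm_set σ) ⟨c • f, ?_, ?_, rfl⟩
    · simp [← mul_sum, hf]
    · rw [cnorm2_smul, hc, inv_mul_cancel₀ hpos.ne']
  rw [avgOp_smul, cnorm2_smul, hc, inv_mul_le_iff₀ hpos] at hmem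
  linarith

lemma L0norm_conv_le (σ τ : H → ℝ) : L0norm (conv σ τ) ≤ L0norm σ * L0norm τ := by
  refine L0norm_le (mul_nonneg (L0norm_nonneg σ) (L0norm_nonneg τ)) fun f hf0 hf1 => ?_
  have hτf : ∑ g, avgOp τ f g = 0 := by rw [sum_avgOp, hf0, mul_zero]
  rw [avgOp_conv]
  calc cnorm2 (avgOp σ (avgOp τ f)) ≤ L0norm σ * cnorm2 (avgOp τ f) :=
        cnorm2_avgOp_le_L0norm σ hτf
    _ ≤ L0norm σ * (L0norm τ * 1) := by
        gcongr
        · exact L0norm_nonneg σ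
        · exact (cnorm2_avgOp_le_L0norm τ hf0).trans
            (mul_le_mul_of_nonneg_left hf1 (L0norm_nonneg τ))
    _ = L0norm σ * L0norm τ := by rw [mul_one]

lemma L0norm_dirac_one_le [DecidableEq H] : L0norm (dirac (1 : H)) ≤ 1 :=
  L0norm_le zero_le_one fun f _ hf => by
    convert hf
    funext g
    simp [avgOp, dirac, apply_ite (fun r : ℝ => (r : ℂ))]

lemma L0norm_itconv_le [DecidableEq H] (σ : H → ℝ) (l : ℕ) :
    L0norm (itconv σ l) ≤ L0norm σ ^ l := by
  induction l with
  | zero => exact L0norm_dirac_one_le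
  | succ n ih =>
    calc L0norm (itconv σ (n + 1)) ≤ L0norm (itconv σ n) * L0norm σ := L0norm_conv_le _ _
      _ ≤ L0norm σ ^ n * L0norm σ := by gcongr; exact L0norm_nonneg σ
      _ = L0norm σ ^ (n + 1) := (pow_succ _ _).symm

lemma sum_conj_avgOp_mul (σ : H → ℝ) (f u : H → ℂ) :
    ∑ g, starRingEnd ℂ (avgOp σ f g) * u g = ∑ g, starRingEnd ℂ (f g) * avgOp (check σ) u g := by
  have hl : ∑ g, starRingEnd ℂ (avgOp σ f g) * u g
      = ∑ s, (σ s : ℂ) * ∑ g, starRingEnd ℂ (f g) * u (s * g) := by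
    simp only [avgOp, map_sum, map_mul, Complex.conj_ofReal, sum_mul, mul_sum]
    rw [sum_comm]
    refine sum_congr rfl fun s _ => ?_
    rw [← sum_comp_mul_left _ s]
    simp [mul_assoc]
  have hr : ∑ g, starRingEnd ℂ (f g) * avgOp (check σ) u g
      = ∑ s, (σ s : ℂ) * ∑ g, starRingEnd ℂ (f g) * u (s * g) := by
    simp only [avgOp, check, mul_sum]
    rw [sum_comm, ← sum_comp_inv]
    simp [mul_left_comm]
  rw [hl, hr]

lemma L0norm_check_le (σ : H → ℝ) : L0norm (check σ) ≤ L0norm σ := by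
  refine L0norm_le (L0norm_nonneg σ) fun f hf0 hf1 => ?_
  set u := avgOp (check σ) f
  rcases (cnorm2_nonneg u).eq_or_lt with h0 | hpos
  · rw [← h0]; exact L0norm_nonneg σ
  have hu0 : ∑ g, u g = 0 := by rw [sum_avgOp, hf0, mul_zero]
  -- `L(σ̌)` is the adjoint of `L(σ)`, so `‖u‖² = ⟨L(σ) u, f⟩ ≤ ‖L(σ) u‖ ‖f‖`.
  have hsq : cnorm2 u ^ 2 ≤ cnorm2 (avgOp σ u) * cnorm2 f := by
    have hinner : ∑ g, starRingEnd ℂ (avgOp σ u g) * f g = ((cnorm2 u ^ 2 : ℝ) : ℂ) := by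
      rw [sum_conj_avgOp_mul, sq_cnorm2]
      push_cast
      exact sum_congr rfl fun g _ => by rw [RCLike.conj_mul (K := ℂ)]; norm_cast
    simpa [hinner] using norm_sum_conj_mul_le (avgOp σ u) f
  have hop := cnorm2_avgOp_le_L0norm σ hu0
  nlinarith [cnorm2_nonneg f, cnorm2_nonneg (avgOp σ u), L0norm_nonneg σ]

lemma L0norm_conv_check_le (σ : H → ℝ) : L0norm (conv (check σ) σ) ≤ L0norm σ ^ 2 :=
  calc L0norm (conv (check σ) σ) ≤ L0norm (check σ) * L0norm σ := L0norm_conv_le _ _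
    _ ≤ L0norm σ * L0norm σ := by gcongr; exacts [L0norm_nonneg σ, L0norm_check_le σ]
    _ = L0norm σ ^ 2 := (sq _).symm

end SpectralGap

section Pushforward

variable {G H : Type*} [Fintype G] [DecidableEq H]

def pushAlong (φ : G → H) (μ : G → ℝ) : H → ℝ :=
  fun σ => ∑ g, if φ g = σ then μ g else 0

lemma sum_pushAlong_mul [Fintype H] (φ : G → H) (μ : G → ℝ) (F : H → ℝ) :
    ∑ σ, pushAlong φ μ σ * F σ = ∑ g, μ g * F (φ g) := by
  simp only [pushAlong, sum_mul, ite_mul, zero_mul]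
  rw [sum_comm]
  simp

variable [Group G] [Group H]

lemma pushAlong_conv [Fintype H] (φ : G →* H) (a b : G → ℝ) :
    pushAlong φ (conv a b) = conv (pushAlong φ a) (pushAlong φ b) := by
  funext σ
  have hb : ∀ h, pushAlong φ b ((φ h)⁻¹ * σ) = ∑ g, if φ g = σ then b (h⁻¹ * g) else 0 := by
    intro h
    rw [← sum_comp_mul_left _ h]
    simp [pushAlong, eq_inv_mul_iff_mul_eq]
  calc pushAlong φ (conv a b) σ = ∑ h, a h * ∑ g, if φ g = σ then b (h⁻¹ * g) else 0 := by
        simp only [pushAlong, conv, mul_sum, mul_ite, mul_zero]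
        rw [sum_comm]
        refine sum_congr rfl fun g _ => ?_
        split_ifs <;> simp
    _ = conv (pushAlong φ a) (pushAlong φ b) σ := by
        simp only [conv, sum_pushAlong_mul, hb]

lemma pushAlong_check (φ : G →* H) (μ : G → ℝ) :
    pushAlong φ (check μ) = check (pushAlong φ μ) := by
  funext σ
  simp only [pushAlong, check]
  rw [← sum_comp_inv]
  simp [inv_eq_iff_eq_inv]

lemma pushAlong_dirac_one [DecidableEq G] (φ : G →* H) :
    pushAlong φ (dirac 1) = dirac 1 := by
  funext σ
  rw [pushAlong, Fintype.sum_eq_single 1 fun g hg => by simp [dirac, hg]]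
  simp [dirac, eq_comm]

lemma pushAlong_itconv [Fintype H] [DecidableEq G] (φ : G →* H) (μ : G → ℝ) (l : ℕ) :
    pushAlong φ (itconv μ l) = itconv (pushAlong φ μ) l := by
  induction l with
  | zero => exact pushAlong_dirac_one φ
  | succ n ih => rw [itconv, pushAlong_conv, ih, itconv]

lemma L0norm_pushAlong_itconv_conv_check_le [Fintype H] [DecidableEq G] (φ : G →* H)
    (μ : G → ℝ) (l : ℕ) :
    L0norm (pushAlong φ (itconv (conv (check μ) μ) l)) ≤ L0norm (pushAlong φ μ) ^ (2 * l) := by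
  rw [pushAlong_itconv, pushAlong_conv, pushAlong_check, pow_mul]
  exact (L0norm_itconv_le _ l).trans
    (pow_le_pow_left₀ (L0norm_nonneg _) (L0norm_conv_check_le _) l)

end Pushforward

section Flattening

variable {G X : Type*} [Group G] [MulAction G X]

lemma sum_comp_smul [Fintype X] {M : Type*} [AddCommMonoid M] (F : X → M) (g : G) :
    ∑ x, F (g • x) = ∑ x, F x :=
  Fintype.sum_equiv (MulAction.toPerm g) _ _ fun _ => rfl

variable [Fintype G]

def smulConv (μ : G → ℝ) (η : X → ℝ) : X → ℝ := fun x => ∑ g, μ g * η (g⁻¹ • x)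

lemma smulConv_conv (σ τ : G → ℝ) (η : X → ℝ) :
    smulConv (conv σ τ) η = smulConv σ (smulConv τ η) := by
  funext x
  simp only [smulConv, conv, sum_mul, mul_sum]
  rw [sum_comm]
  refine sum_congr rfl fun h _ => ?_
  rw [← sum_comp_mul_left _ h]
  simp [mul_assoc, mul_smul]

lemma smulConv_dirac_one [DecidableEq G] (η : X → ℝ) : smulConv (dirac (1 : G)) η = η := by
  funext x
  simp [smulConv, dirac]

lemma smulConv_mono {μ : G → ℝ} {η η' : X → ℝ} (hμ : ∀ g, 0 ≤ μ g) (h : ∀ x, η x ≤ η' x)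
    (x : X) : smulConv μ η x ≤ smulConv μ η' x :=
  sum_le_sum fun g _ => mul_le_mul_of_nonneg_left (h _) (hμ g)

lemma smulConv_const_add_mul {μ : G → ℝ} (hμ : ∑ g, μ g = 1) (a b : ℝ) (η : X → ℝ) (x : X) :
    smulConv μ (fun y => a + b * η y) x = a + b * smulConv μ η x := by
  have h : ∀ g, μ g * (a + b * η (g⁻¹ • x)) = a * μ g + b * (μ g * η (g⁻¹ • x)) :=
    fun g => by ring
  simp only [smulConv, h, sum_add_distrib, ← mul_sum, hμ, mul_one]

lemma smulConv_le {μ : G → ℝ} {η : X → ℝ} {B : ℝ} (hμ : IsProb μ) (h : ∀ x, η x ≤ B)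
    (x : X) : smulConv μ η x ≤ B := by
  calc smulConv μ η x ≤ ∑ g, μ g * B :=
        sum_le_sum fun g _ => mul_le_mul_of_nonneg_left (h _) (hμ.1 g)
    _ = B := by rw [← sum_mul, hμ.2, one_mul]

lemma IsProb.smulConv [Fintype X] {μ : G → ℝ} {η : X → ℝ} (hμ : IsProb μ) (hη : IsProb η) :
    IsProb (smulConv μ η) := by
  refine ⟨fun _ => sum_nonneg fun g _ => mul_nonneg (hμ.1 g) (hη.1 _), ?_⟩
  simp only [Paper.smulConv]
  rw [sum_comm]
  simp only [← mul_sum, sum_comp_smul η, hη.2, mul_one, hμ.2]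

lemma IsProb.le_one_sub {β : Type*} [Fintype β] {η : β → ℝ} (hη : IsProb η) {x y : β}
    (hxy : x ≠ y) : η x ≤ 1 - η y := by
  classical
  have := sum_le_univ_sum_of_nonneg (s := {x, y}) hη.1
  rw [sum_pair hxy, hη.2] at this
  linarith

lemma smulConv_conv_check_dirac_le [DecidableEq X] {μ : G → ℝ} {α : ℝ} (hμ : IsProb μ)
    (hα : ∀ z y : X, smulConv μ (dirac z) y ≤ α) (z y : X) :
    smulConv (conv (check μ) μ) (dirac z) y ≤ α := by
  rw [smulConv_conv]
  exact smulConv_le hμ.check (hα z) y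

lemma smulConv_le_half_add [Fintype X] [DecidableEq X] {ν : G → ℝ} {η : X → ℝ} {α m : ℝ}
    (hν : IsProb ν) (hνα : ∀ z y : X, smulConv ν (dirac z) y ≤ α) (hη : IsProb η) (hm : 0 ≤ m)
    (hηm : ∀ z, η z ≤ 1 / 2 + m) (y : X) :
    smulConv ν η y ≤ 1 / 2 + max (2 * α - 1) 0 * m := by
  have : Nonempty X := ⟨y⟩
  obtain ⟨x₀, hx₀⟩ := Finite.exists_max η
  set M := η x₀
  have hcm : 0 ≤ max (2 * α - 1) 0 * m := mul_nonneg (le_max_right _ _) hm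
  by_cases hM : M ≤ 1 / 2
  · linarith [smulConv_le hν (fun z => (hx₀ z).trans hM) y]
  have hpt : ∀ z, η z ≤ (1 - M) + (2 * M - 1) * dirac x₀ z := by
    intro z
    by_cases hz : z = x₀
    · simp only [hz, dirac, if_true, M]
      linarith
    · simpa [dirac, hz] using hη.le_one_sub hz
  calc smulConv ν η y ≤ (1 - M) + (2 * M - 1) * smulConv ν (dirac x₀) y :=
        (smulConv_mono hν.1 hpt y).trans_eq (smulConv_const_add_mul hν.2 _ _ _ y)
    _ ≤ (1 - M) + (2 * M - 1) * α := by gcongr; exacts [by linarith, hνα x₀ y]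
    _ = 1 / 2 + (M - 1 / 2) * (2 * α - 1) := by ring
    _ ≤ 1 / 2 + max (2 * α - 1) 0 * m := by
        nlinarith [le_max_left (2 * α - 1) 0, le_max_right (2 * α - 1) 0, hηm x₀]

lemma smulConv_itconv_dirac_le [Fintype X] [DecidableEq X] [DecidableEq G] {ν : G → ℝ}
    {α : ℝ} (hν : IsProb ν) (hνα : ∀ z y : X, smulConv ν (dirac z) y ≤ α) (x : X) (l : ℕ)
    (y : X) : smulConv (itconv ν l) (dirac x) y ≤ 1 / 2 + max (2 * α - 1) 0 ^ l / 2 := by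
  induction l generalizing y with
  | zero =>
    rw [itconv, smulConv_dirac_one]
    unfold dirac
    split <;> norm_num
  | succ l ih =>
    rw [itconv_succ_left, smulConv_conv, pow_succ', mul_div_assoc]
    exact smulConv_le_half_add hν hνα ((hν.itconv l).smulConv (isProb_dirac x))
      (by positivity) ih y

lemma norm2V_le_sqrt {β : Type*} [Fintype β] {η : β → ℝ} {B : ℝ} (hη : IsProb η)
    (hB : ∀ x, η x ≤ B) : norm2V η ≤ √B := by
  refine Real.sqrt_le_sqrt ?_
  calc ∑ x, η x ^ 2 ≤ ∑ x, η x * B := sum_le_sum fun x _ => by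
        rw [sq]; exact mul_le_mul_of_nonneg_left (hB x) (hη.1 x)
    _ = B := by rw [← sum_mul, hη.2, one_mul]

end Flattening

section Numerics

lemma pow_le_exp_neg_mul {t : ℝ} (ht : 0 ≤ t) (n : ℕ) : t ^ n ≤ Real.exp (-(n * (1 - t))) :=
  calc t ^ n ≤ Real.exp (-(1 - t)) ^ n :=
        pow_le_pow_left₀ ht (by simpa using Real.one_sub_le_exp_neg (1 - t)) n
    _ = Real.exp (-(n * (1 - t))) := by rw [← Real.exp_nat_mul]; ring_nf

lemma pow_two_mul_le_half {t : ℝ} (ht : 0 ≤ t) {l : ℕ} (hl : Real.log 2 ≤ l * (2 - 2 * t)) :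
    t ^ (2 * l) ≤ 1 / 2 :=
  calc t ^ (2 * l) ≤ Real.exp (-((2 * l : ℕ) * (1 - t))) := pow_le_exp_neg_mul ht _
    _ ≤ Real.exp (-Real.log 2) := Real.exp_le_exp.2 (by push_cast; linarith)
    _ = 1 / 2 := by rw [Real.exp_neg, Real.exp_log two_pos, one_div]

lemma max_two_mul_sub_one_pow_le {α : ℝ} (hα : 0 ≤ α) {l : ℕ} (hl : 3 ≤ l * (1 - α)) :
    max (2 * α - 1) 0 ^ l ≤ 1 / 8 := by
  have hα1 : α ≤ 1 := by
    by_contra! h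
    nlinarith [l.cast_nonneg (α := ℝ)]
  have h3 : 3 ≤ l * (1 - max (2 * α - 1) 0) :=
    hl.trans (by gcongr; exact max_le (by linarith) hα)
  have h8 : 8 ≤ Real.exp 3 := by nlinarith [Real.quadratic_le_exp_of_nonneg (x := 3) (by norm_num)]
  calc max (2 * α - 1) 0 ^ l ≤ Real.exp (-(l * (1 - max (2 * α - 1) 0))) :=
        pow_le_exp_neg_mul (le_max_right _ _) l
    _ ≤ Real.exp (-3) := Real.exp_le_exp.2 (by linarith)
    _ ≤ 1 / 8 := by
        rw [Real.exp_neg, one_div]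
        exact inv_anti₀ (by norm_num) h8

end Numerics

section AffineGroup

instance : MulAction (Aff p d) (V p d) where
  smul := Aff.aact
  one_smul x := by
    show (0 : V p d) + ((1 : SL p d) : Matrix (Fin d) (Fin d) (ZMod p)) *ᵥ x = x
    simp
  mul_smul g h x := by
    show (g.1 + (g.2 : Matrix (Fin d) (Fin d) (ZMod p)) *ᵥ h.1) +
        ((g.2 * h.2 : SL p d) : Matrix (Fin d) (Fin d) (ZMod p)) *ᵥ x =
      g.1 + (g.2 : Matrix (Fin d) (Fin d) (ZMod p)) *ᵥ
        (h.1 + (h.2 : Matrix (Fin d) (Fin d) (ZMod p)) *ᵥ x)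
    simp [Matrix.mulVec_add, Matrix.mulVec_mulVec, add_assoc]

def Aff.linHom : Aff p d →* SL p d where
  toFun := Aff.lin
  map_one' := rfl
  map_mul' _ _ := rfl

lemma actConv_eq_smulConv [NeZero p] (μ : Aff p d → ℝ) (η : V p d → ℝ) :
    actConv μ η = smulConv μ η := rfl

end AffineGroup

theorem statement12_general (p d : ℕ) [Fact p.Prime]
    (μ : Aff p d → ℝ) (hμ : IsProb μ)
    (α : ℝ) (hα : α = ⨆ x : V p d, ⨆ y : V p d, actConv μ (dirac x) y) (hα1 : α < 1)
    (hgap : L0theta μ < 1)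
    (l₀ : ℕ)
    (hl₀ : max (3 / (1 - α)) (Real.log 2 / (2 - 2 * L0theta μ)) ≤ (l₀ : ℝ)) :
    L0theta (itconv (conv (check μ) μ) l₀) ≤ 1 / 2 ∧
      ∀ x : V p d,
        norm2V (actConv (itconv (conv (check μ) μ) l₀) (dirac x)) ≤ 3 / 4 := by
  have hl₃ : 3 ≤ l₀ * (1 - α) := (div_le_iff₀ (by linarith)).1 (le_of_max_le_left hl₀)
  have hlog : Real.log 2 ≤ l₀ * (2 - 2 * L0theta μ) :=
    (div_le_iff₀ (by linarith)).1 (le_of_max_le_right hl₀)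
  simp only [actConv_eq_smulConv] at hα ⊢
  have hμα : ∀ z y : V p d, smulConv μ (dirac z) y ≤ α := fun z y =>
    hα ▸ le_ciSup_of_le (Finite.bddAbove_range _) z (le_ciSup (Finite.bddAbove_range _) y)
  have hν := hμ.check.conv hμ
  refine ⟨?_, fun x => ?_⟩
  · exact (L0norm_pushAlong_itconv_conv_check_le Aff.linHom μ l₀).trans
      (pow_two_mul_le_half (L0norm_nonneg _) hlog)
  · have hα₀ : 0 ≤ α := ((hμ.smulConv (isProb_dirac 0)).1 0).trans (hμα 0 0)
    refine (norm2V_le_sqrt (B := 9 / 16) ((hν.itconv l₀).smulConv (isProb_dirac x))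
      fun y => ?_).trans_eq ?_
    · linarith [smulConv_itconv_dirac_le hν (smulConv_conv_check_dirac_le hμ hμα) x l₀ y,
        max_two_mul_sub_one_pow_le hα₀ hl₃]
    · rw [show (9 / 16 : ℝ) = (3 / 4) ^ 2 by norm_num]
      exact Real.sqrt_sq (by norm_num)

/-- (Lemma `mu0`.) Let `μ` be a probability measure on `G`, let
`α = max_{x,y} (μ.δ_x)(y) < 1` and `‖L₀^θ(μ)‖ < 1`, and let `l₀` be an integer with
`l₀ ≥ max{3/(1−α), log 2/(2 − 2‖L₀^θ(μ)‖)}`.  Then `μ₀ = (μ̌∗μ)^{*(l₀)}` satisfies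
`‖L₀^θ(μ₀)‖ ≤ 1/2` and `‖μ₀.δ_x‖_{L²} ≤ 3/4` for every `x`. -/
theorem statement12 (p d : ℕ) [Fact p.Prime] (hd : 0 < d)
    (μ : Aff p d → ℝ) (hμ : IsProb μ)
    (α : ℝ) (hα : α = ⨆ x : V p d, ⨆ y : V p d, actConv μ (dirac x) y) (hα1 : α < 1)
    (hgap : L0theta μ < 1)
    (l₀ : ℕ)
    (hl₀ : max (3 / (1 - α)) (Real.log 2 / (2 - 2 * L0theta μ)) ≤ (l₀ : ℝ)) :
    L0theta (itconv (conv (check μ) μ) l₀) ≤ 1 / 2 ∧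
      ∀ x : V p d,
        norm2V (actConv (itconv (conv (check μ) μ) l₀) (dirac x)) ≤ 3 / 4 :=
  statement12_general p d μ hμ α hα hα1 hgap l₀ hl₀

end Paper
end

section
/- Let μ be a probability measure on G = F_p^d ⋊ SL_d(F_p) such that ‖μ.δ_x‖_{L²} ≤ 3/4 for every x ∈ F_p^d, and let η be a probability measure on F_p^d for which there exists a point x₀ ∈ F_p^d with η(x₀) ≥ (40/41)·‖η‖_{L²}. Then ‖μ.η‖_{L²} ≤ (39/41)·‖η‖_{L²}; in particular ‖μ.η‖_{L²} ≤ e^{−1/32}·‖η‖_{L²}. -/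
/-!
Write `η = a δ_{x₀} + η'` with `a = η(x₀)` and `η'` vanishing at `x₀`, so `a² + ‖η'‖² = ‖η‖²`.
Each `g ∈ G` permutes `F_p^d`, so `ν ↦ μ.ν` is a contraction of `L²`, and therefore
`‖μ.η‖ ≤ (3/4) a + ‖η'‖`. Maximising `(3/4) a + √(‖η‖² - a²)` over `a ≥ (40/41)‖η‖` gives
`(39/41)‖η‖`, and `39/41 ≤ 1 - 1/32 ≤ e^{-1/32}`.
-/

open scoped BigOperators Matrix

namespace Paper

variable {p d : ℕ}

namespace Aff

variable {p d : ℕ}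

lemma aact_one (x : V p d) : aact 1 x = x := by
  change (0 : V p d) + ((1 : SL p d) : Matrix (Fin d) (Fin d) (ZMod p)) *ᵥ x = x
  simp

lemma aact_mul (g h : Aff p d) (x : V p d) : aact (g * h) x = aact g (aact h x) := by
  change g.1 + g.2 *ᵥ h.1 + ((g.2 * h.2 : SL p d) : Matrix (Fin d) (Fin d) (ZMod p)) *ᵥ x
    = g.1 + g.2 *ᵥ (h.1 + h.2 *ᵥ x)
  simp [Matrix.mulVec_add, Matrix.mulVec_mulVec, add_assoc]

instance : MulAction (Aff p d) (V p d) where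
  smul := aact
  one_smul := aact_one
  mul_smul := aact_mul

lemma smul_def (g : Aff p d) (x : V p d) : g • x = aact g x := rfl

end Aff

section norm2V

variable {β : Type*} [Fintype β]

lemma norm2V_eq_norm_toLp (f : β → ℝ) : norm2V f = ‖WithLp.toLp 2 f‖ := by
  simp [norm2V, EuclideanSpace.norm_eq, sq_abs]

lemma norm2V_nonneg (f : β → ℝ) : 0 ≤ norm2V f :=
  Real.sqrt_nonneg _

lemma sq_norm2V (f : β → ℝ) : norm2V f ^ 2 = ∑ x, f x ^ 2 :=
  Real.sq_sqrt (Finset.sum_nonneg fun _ _ => sq_nonneg _)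

lemma norm2V_add_le (f g : β → ℝ) : norm2V (f + g) ≤ norm2V f + norm2V g := by
  simpa only [norm2V_eq_norm_toLp, WithLp.toLp_add] using norm_add_le _ _

lemma norm2V_smul (c : ℝ) (f : β → ℝ) : norm2V (c • f) = |c| * norm2V f := by
  rw [norm2V_eq_norm_toLp, norm2V_eq_norm_toLp, WithLp.toLp_smul, norm_smul, Real.norm_eq_abs]

lemma norm2V_sum_le {ι : Type*} (s : Finset ι) (f : ι → β → ℝ) :
    norm2V (∑ i ∈ s, f i) ≤ ∑ i ∈ s, norm2V (f i) := by
  simpa only [norm2V_eq_norm_toLp, WithLp.toLp_sum] using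
    norm_sum_le s fun i => WithLp.toLp 2 (f i)

lemma norm2V_comp_equiv (f : β → ℝ) (e : β ≃ β) : norm2V (f ∘ e) = norm2V f := by
  simp only [norm2V, Function.comp_apply, Equiv.sum_comp e fun x => f x ^ 2]

lemma sq_norm2V_eq_sq_add_sq_norm2V_update [DecidableEq β] (f : β → ℝ) (x₀ : β) :
    norm2V f ^ 2 = f x₀ ^ 2 + norm2V (Function.update f x₀ 0) ^ 2 := by
  rw [sq_norm2V, sq_norm2V, Fintype.sum_eq_add_sum_compl x₀, Fintype.sum_eq_add_sum_compl x₀]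
  have h_off : ∀ x ∈ ({x₀}ᶜ : Finset β), Function.update f x₀ 0 x ^ 2 = f x ^ 2 :=
    fun x hx => by rw [Function.update_of_ne (by simpa using hx)]
  simp [Finset.sum_congr rfl h_off]

end norm2V

section actConv

variable [NeZero p]

lemma actConv_add (μ : Aff p d → ℝ) (ν₁ ν₂ : V p d → ℝ) :
    actConv μ (ν₁ + ν₂) = actConv μ ν₁ + actConv μ ν₂ := by
  funext x
  simp [actConv, mul_add, Finset.sum_add_distrib]

lemma actConv_smul (μ : Aff p d → ℝ) (c : ℝ) (ν : V p d → ℝ) :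
    actConv μ (c • ν) = c • actConv μ ν := by
  funext x
  simp [actConv, Finset.mul_sum, mul_left_comm]

lemma actConv_eq_sum (μ : Aff p d → ℝ) (ν : V p d → ℝ) :
    actConv μ ν = ∑ g : Aff p d, μ g • (ν ∘ MulAction.toPerm g⁻¹) := by
  funext x
  simp [actConv, Finset.sum_apply, Aff.smul_def]

lemma norm2V_actConv_le (μ : Aff p d → ℝ) (hμ : ∀ g, 0 ≤ μ g) (ν : V p d → ℝ) :
    norm2V (actConv μ ν) ≤ (∑ g, μ g) * norm2V ν := by
  calc norm2V (actConv μ ν)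
      ≤ ∑ g : Aff p d, norm2V (μ g • (ν ∘ MulAction.toPerm g⁻¹)) := by
        rw [actConv_eq_sum]; exact norm2V_sum_le _ _
    _ = (∑ g, μ g) * norm2V ν := by
        simp only [norm2V_smul, norm2V_comp_equiv, abs_of_nonneg (hμ _), Finset.sum_mul]

end actConv

/- On the circle `a² + b² = N²` the left side decreases in `a` once `a ≥ 3/5 N`, so the worst case
is `(a, b) = (40/41 N, 9/41 N)`; the factor `a + 64/1025 N` comes from factoring
`(39/41 N - 3/4 a)² - b²`. -/
lemma three_quarters_mul_add_le {a b N : ℝ} (hN : 0 ≤ N)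
    (hab : a ^ 2 + b ^ 2 = N ^ 2) (ha : 40 / 41 * N ≤ a) : 3 / 4 * a + b ≤ 39 / 41 * N := by
  have haN : a ≤ N := by nlinarith
  have hquad : 0 ≤ (a - 40 / 41 * N) * (a + 64 / 1025 * N) :=
    mul_nonneg (by linarith) (by linarith)
  nlinarith

theorem statement16_general (p d : ℕ) [Fact p.Prime]
    (μ : Aff p d → ℝ) (hμ : IsProb μ)
    (hL2 : ∀ x : V p d, norm2V (actConv μ (dirac x)) ≤ 3 / 4)
    (η : V p d → ℝ)
    (x₀ : V p d) (hx₀ : (40 / 41) * norm2V η ≤ η x₀) :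
    norm2V (actConv μ η) ≤ (39 / 41) * norm2V η ∧
      norm2V (actConv μ η) ≤ Real.exp (-(1 / 32)) * norm2V η := by
  set η' := Function.update η x₀ 0
  have h_split : η = η x₀ • dirac x₀ + η' := by
    funext x
    by_cases hx : x = x₀ <;> simp [η', dirac, hx]
  have ha : 0 ≤ η x₀ := (mul_nonneg (by norm_num) (norm2V_nonneg η)).trans hx₀
  have h_bound : norm2V (actConv μ η) ≤ 3 / 4 * η x₀ + norm2V η' :=
    calc norm2V (actConv μ η)
        ≤ |η x₀| * norm2V (actConv μ (dirac x₀)) + norm2V (actConv μ η') := by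
          conv_lhs => rw [h_split, actConv_add, actConv_smul]
          exact (norm2V_add_le _ _).trans_eq (by rw [norm2V_smul])
      _ ≤ η x₀ * (3 / 4) + 1 * norm2V η' := by
          rw [abs_of_nonneg ha, ← hμ.2]
          gcongr
          exacts [hL2 x₀, norm2V_actConv_le μ hμ.1 η']
      _ = 3 / 4 * η x₀ + norm2V η' := by ring
  have h_ratio := h_bound.trans <| three_quarters_mul_add_le (norm2V_nonneg η)
    (sq_norm2V_eq_sq_add_sq_norm2V_update η x₀).symm hx₀
  refine ⟨h_ratio, h_ratio.trans (mul_le_mul_of_nonneg_right ?_ (norm2V_nonneg η))⟩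
  linarith [Real.add_one_le_exp (-(1 / 32) : ℝ)]

/-- If `μ` is a probability measure on `G` with `‖μ.δ_x‖_{L²} ≤ 3/4` for
every `x`, and `η` is a probability measure on `F_p^d` with `η(x₀) ≥ (40/41)‖η‖_{L²}` for
some `x₀`, then `‖μ.η‖_{L²} ≤ (39/41)‖η‖_{L²} ≤ e^{−1/32}‖η‖_{L²}`. -/
theorem statement16 (p d : ℕ) [Fact p.Prime] (hd : 0 < d)
    (μ : Aff p d → ℝ) (hμ : IsProb μ)
    (hL2 : ∀ x : V p d, norm2V (actConv μ (dirac x)) ≤ 3 / 4)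
    (η : V p d → ℝ) (hη : IsProb η)
    (x₀ : V p d) (hx₀ : (40 / 41) * norm2V η ≤ η x₀) :
    norm2V (actConv μ η) ≤ (39 / 41) * norm2V η ∧
      norm2V (actConv μ η) ≤ Real.exp (-(1 / 32)) * norm2V η :=
  statement16_general p d μ hμ hL2 η x₀ hx₀

end Paper
end
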